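/- arXiv:2008.08985 — 10 statements merged into one kernel-verified Lean document; each statement's English description precedes it below -/
import Mathlib

section
/- If a prize allocation rule satisfies endowment monotonicity, then it satisfies endowment continuity. -/
open Finset
open scoped ENNReal

/-- A prize allocation rule: assigns to each (set of competitors, ranking, endowment)
a payoff for each competitor. The set of potential competitors is `ℕ`
(a countable set with at least three elements). -/
abbrev Rule : Type := Finset ℕ → (ℕ → ℕ) → ℝ → ℕ → ℝ

/-- `R` is a ranking of `N`: a bijection from `N` onto `{1, …, |N|}`. -/
def IsRanking (N : Finset ℕ) (R : ℕ → ℕ) : Prop :=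
  Set.BijOn R ↑N (Set.Icc 1 N.card)

/-- `(N, R, E)` is a competition: `N` is finite nonempty, `R` is a ranking of `N`,
and the prize endowment `E` is nonnegative. -/
def IsCompetition (N : Finset ℕ) (R : ℕ → ℕ) (E : ℝ) : Prop :=
  N.Nonempty ∧ IsRanking N R ∧ 0 ≤ E

/-- `φ` is a prize allocation rule: on every competition it yields nonnegative prizes
summing to the endowment. -/
def IsRule (φ : Rule) : Prop :=
  ∀ N R E, IsCompetition N R E →
    (∀ i ∈ N, 0 ≤ φ N R E i) ∧ ∑ i ∈ N, φ N R E i = E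

/-- The canonical subranking of `S` induced by `R`: the position of `i` within `S`. -/
def subRank (S : Finset ℕ) (R : ℕ → ℕ) : ℕ → ℕ :=
  fun i => (S.filter fun j => R j ≤ R i).card

/-- Order preservation: a higher-ranked competitor gets at least as much. -/
def OrderPreserving (φ : Rule) : Prop :=
  ∀ N R E, IsCompetition N R E → ∀ i ∈ N, ∀ j ∈ N, R i < R j →
    φ N R E j ≤ φ N R E i

/-- Strict order preservation. -/
def StrictOrderPreserving (φ : Rule) : Prop :=
  ∀ N R E, IsCompetition N R E → 0 < E → ∀ i ∈ N, ∀ j ∈ N, R i < R j →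
    φ N R E j < φ N R E i

/-- Winner-loser strict order preservation. -/
def WinnerLoserStrictOP (φ : Rule) : Prop :=
  OrderPreserving φ ∧
    ∀ N R E, IsCompetition N R E → 0 < E → ∀ i ∈ N, ∀ j ∈ N, i ≠ j →
      R i = 1 → R j = N.card → φ N R E j < φ N R E i

/-- Endowment monotonicity. -/
def EndowMono (φ : Rule) : Prop :=
  ∀ N R E E', IsCompetition N R E → IsCompetition N R E' → E < E' →
    ∀ i ∈ N, φ N R E i ≤ φ N R E' i

/-- Strict endowment monotonicity. -/
def StrictEndowMono (φ : Rule) : Prop :=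
  ∀ N R E E', IsCompetition N R E → IsCompetition N R E' → E < E' →
    ∀ i ∈ N, φ N R E i < φ N R E' i

/-- Winner strict endowment monotonicity. -/
def WinnerStrictEndowMono (φ : Rule) : Prop :=
  EndowMono φ ∧
    ∀ N R E E', IsCompetition N R E → IsCompetition N R E' → E < E' →
      ∀ i ∈ N, R i = 1 → φ N R E i < φ N R E' i

/-- Endowment continuity: each prize depends continuously on the endowment. -/
def EndowCont (φ : Rule) : Prop :=
  ∀ N R, N.Nonempty → IsRanking N R → ∀ i ∈ N,
    ContinuousOn (fun E => φ N R E i) (Set.Ici 0)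

/-- Consistency. -/
def Consistent (φ : Rule) : Prop :=
  ∀ N R E, IsCompetition N R E → ∀ S ⊆ N, S.Nonempty → ∀ i ∈ S,
    φ N R E i = φ S (subRank S R) (∑ j ∈ S, φ N R E j) i

/-- Local consistency: consistency for sets of competitors with contiguous positions. -/
def LocallyConsistent (φ : Rule) : Prop :=
  ∀ N R E, IsCompetition N R E → ∀ S ⊆ N, S.Nonempty →
    (∀ i ∈ S, ∀ j ∈ S, |(R i : ℤ) - (R j : ℤ)| ≤ (S.card : ℤ) - 1) →
    ∀ i ∈ S, φ N R E i = φ S (subRank S R) (∑ j ∈ S, φ N R E j) i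

/-- Top consistency: consistency for sets of top-ranked competitors. -/
def TopConsistent (φ : Rule) : Prop :=
  ∀ N R E, IsCompetition N R E → ∀ S ⊆ N, S.Nonempty →
    (∀ i ∈ S, R i ≤ S.card) →
    ∀ i ∈ S, φ N R E i = φ S (subRank S R) (∑ j ∈ S, φ N R E j) i

/-- Anonymity: prizes depend only on the position. -/
def Anonymous (φ : Rule) : Prop :=
  ∀ N R N' R' E, IsCompetition N R E → IsCompetition N' R' E →
    N.card = N'.card → ∀ i ∈ N, ∀ j ∈ N', R i = R' j →
      φ N R E i = φ N' R' E j

/-- Endowment additivity. -/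
def EndowAdditive (φ : Rule) : Prop :=
  ∀ N R, N.Nonempty → IsRanking N R → ∀ E E' : ℝ, 0 ≤ E → 0 ≤ E' →
    ∀ i ∈ N, φ N R (E + E') i = φ N R E i + φ N R E' i

/-- Scale invariance. -/
def ScaleInvariant (φ : Rule) : Prop :=
  ∀ N R E, IsCompetition N R E → ∀ i ∈ N, φ N R E i = E * φ N R 1 i

/-- If a prize allocation rule satisfies endowment monotonicity,
then it satisfies endowment continuity. -/
theorem endowMono_implies_endowCont (φ : Rule) (hrule : IsRule φ)
    (hmono : EndowMono φ) : EndowCont φ := by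
  intro N R hN hR i hi
  -- key: monotone differences bounded by endowment difference
  have key : ∀ E E' : ℝ, 0 ≤ E → 0 ≤ E' → E ≤ E' →
      φ N R E i ≤ φ N R E' i ∧ φ N R E' i - φ N R E i ≤ E' - E := by
    intro E E' hE hE' hle
    have hC : IsCompetition N R E := ⟨hN, hR, hE⟩
    have hC' : IsCompetition N R E' := ⟨hN, hR, hE'⟩
    rcases eq_or_lt_of_le hle with rfl | hlt
    · simp
    have hm : ∀ j ∈ N, φ N R E j ≤ φ N R E' j := hmono N R E E' hC hC' hlt
    refine ⟨hm i hi, ?_⟩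
    have hsum : ∑ j ∈ N, (φ N R E' j - φ N R E j) = E' - E := by
      rw [Finset.sum_sub_distrib, (hrule N R E hC).2, (hrule N R E' hC').2]
    calc φ N R E' i - φ N R E i
        ≤ ∑ j ∈ N, (φ N R E' j - φ N R E j) :=
          Finset.single_le_sum (fun j hj => sub_nonneg.2 (hm j hj)) hi
      _ = E' - E := hsum
  have hlip : LipschitzOnWith 1 (fun E => φ N R E i) (Set.Ici 0) := by
    apply LipschitzOnWith.of_dist_le_mul
    intro x hx y hy
    simp only [Real.dist_eq, NNReal.coe_one, one_mul]
    rcases le_total x y with h | h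
    · obtain ⟨h1, h2⟩ := key x y hx hy h
      rw [abs_sub_comm, abs_of_nonneg (sub_nonneg.2 h1), abs_sub_comm x y,
        abs_of_nonneg (sub_nonneg.2 h)]
      exact h2
    · obtain ⟨h1, h2⟩ := key y x hy hx h
      rw [abs_of_nonneg (sub_nonneg.2 h1), abs_of_nonneg (sub_nonneg.2 h)]
      exact h2
  exact hlip.continuousOn
end

section
/- If two prize allocation rules satisfying endowment monotonicity and consistency coincide for each competition with two competitors, then the two rules coincide for each competition with an arbitrary number of competitors. -/
open Finset
open scoped ENNReal

lemma subRank_isRanking {N S : Finset ℕ} {R : ℕ → ℕ} (hS : S ⊆ N)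
    (hR : IsRanking N R) : IsRanking S (subRank S R) := by
  have hRinj : Set.InjOn R ↑N := hR.injOn
  have hinj : Set.InjOn (subRank S R) ↑S := by
    intro a ha b hb hab
    have key : ∀ x ∈ S, ∀ y ∈ S, R x < R y → subRank S R x < subRank S R y := by
      intro x hx y hy hxy
      apply Finset.card_lt_card
      constructor
      · intro k hk
        rw [Finset.mem_filter] at hk ⊢
        exact ⟨hk.1, le_trans hk.2 hxy.le⟩
      · intro hsub
        have : y ∈ S.filter fun j => R j ≤ R y := by
          simp [Finset.mem_filter, hy]
        have := hsub this
        simp only [Finset.mem_filter] at this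
        omega
    rcases lt_trichotomy (R a) (R b) with h | h | h
    · exact absurd hab (key a ha b hb h).ne
    · exact hRinj (hS ha) (hS hb) h
    · exact absurd hab.symm (key b hb a ha h).ne
  have hmaps : ∀ x ∈ S, subRank S R x ∈ Finset.Icc 1 S.card := by
    intro x hx
    rw [Finset.mem_Icc]
    constructor
    · have : x ∈ S.filter fun j => R j ≤ R x := by simp [hx]
      exact Finset.card_pos.2 ⟨x, this⟩
    · exact Finset.card_le_card (Finset.filter_subset _ _)
  have himg : S.image (subRank S R) = Finset.Icc 1 S.card := by
    apply Finset.eq_of_subset_of_card_le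
    · intro k hk
      simp only [Finset.mem_image] at hk
      obtain ⟨x, hx, rfl⟩ := hk
      exact hmaps x hx
    · rw [Finset.card_image_of_injOn hinj, Nat.card_Icc]
      omega
  refine ⟨fun x hx => ?_, hinj, ?_⟩
  · have := hmaps x hx
    simpa [Set.mem_Icc, Finset.mem_Icc] using this
  · intro k hk
    have hk' : k ∈ Finset.Icc 1 S.card := by
      simpa [Finset.mem_Icc, Set.mem_Icc] using hk
    rw [← himg] at hk'
    simp only [Finset.mem_image] at hk'
    obtain ⟨x, hx, rfl⟩ := hk'
    exact ⟨x, hx, rfl⟩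

lemma pair_sum_lt (φ ψ : Rule) (hφ : IsRule φ) (hψ : IsRule ψ)
    (hψm : EndowMono ψ) (hφc : Consistent φ) (hψc : Consistent ψ)
    (h2 : ∀ N R E, IsCompetition N R E → N.card = 2 → ∀ i ∈ N, φ N R E i = ψ N R E i)
    {N : Finset ℕ} {R : ℕ → ℕ} {E : ℝ} (hC : IsCompetition N R E)
    {i j : ℕ} (hi : i ∈ N) (hj : j ∈ N) (hij : i ≠ j)
    (hgt : ψ N R E i < φ N R E i) :
    ψ N R E i + ψ N R E j < φ N R E i + φ N R E j := by
  obtain ⟨hNne, hR, hE⟩ := hC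
  set S : Finset ℕ := {i, j} with hSdef
  have hSsub : S ⊆ N := by
    intro k hk
    simp only [hSdef, Finset.mem_insert, Finset.mem_singleton] at hk
    rcases hk with rfl | rfl <;> assumption
  have hSne : S.Nonempty := ⟨i, by simp [hSdef]⟩
  have hiS : i ∈ S := by simp [hSdef]
  have hScard : S.card = 2 := by
    rw [hSdef, Finset.card_insert_of_notMem (by simpa using hij), Finset.card_singleton]
  have hrank : IsRanking S (subRank S R) := subRank_isRanking hSsub hR
  have hsumx : ∑ k ∈ S, φ N R E k = φ N R E i + φ N R E j := Finset.sum_pair hij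
  have hsumy : ∑ k ∈ S, ψ N R E k = ψ N R E i + ψ N R E j := Finset.sum_pair hij
  have hxnn := (hφ N R E ⟨hNne, hR, hE⟩).1
  have hynn := (hψ N R E ⟨hNne, hR, hE⟩).1
  have hsx : (0:ℝ) ≤ φ N R E i + φ N R E j := add_nonneg (hxnn i hi) (hxnn j hj)
  have hsy : (0:ℝ) ≤ ψ N R E i + ψ N R E j := add_nonneg (hynn i hi) (hynn j hj)
  have hCx : IsCompetition S (subRank S R) (φ N R E i + φ N R E j) := ⟨hSne, hrank, hsx⟩
  have hCy : IsCompetition S (subRank S R) (ψ N R E i + ψ N R E j) := ⟨hSne, hrank, hsy⟩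
  have hx : φ N R E i = ψ S (subRank S R) (φ N R E i + φ N R E j) i := by
    have h0 := hφc N R E ⟨hNne, hR, hE⟩ S hSsub hSne i hiS
    rw [hsumx] at h0
    exact h0.trans (h2 S (subRank S R) _ hCx hScard i hiS)
  have hy : ψ N R E i = ψ S (subRank S R) (ψ N R E i + ψ N R E j) i := by
    have h0 := hψc N R E ⟨hNne, hR, hE⟩ S hSsub hSne i hiS
    rw [hsumy] at h0
    exact h0
  by_contra hle
  push_neg at hle
  rcases eq_or_lt_of_le hle with heq | hlt
  · rw [hx, hy, heq] at hgt
    exact lt_irrefl _ hgt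
  · have := hψm S (subRank S R) _ _ hCx hCy hlt i hiS
    rw [← hx, ← hy] at this
    exact absurd this (not_le.2 hgt)

/-- If two prize allocation rules satisfying endowment monotonicity and consistency
coincide for each competition with two competitors, then they coincide for each
competition with an arbitrary number of competitors. -/
theorem consistent_extension_unique (φ ψ : Rule) (hφ : IsRule φ) (hψ : IsRule ψ)
    (hφm : EndowMono φ) (hψm : EndowMono ψ)
    (hφc : Consistent φ) (hψc : Consistent ψ)
    (h2 : ∀ N R E, IsCompetition N R E → N.card = 2 → ∀ i ∈ N, φ N R E i = ψ N R E i) :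
    ∀ N R E, IsCompetition N R E → ∀ i ∈ N, φ N R E i = ψ N R E i := by
  intro N R E hC i hi
  by_contra hne
  have hsumφ := (hφ N R E hC).2
  have hsumψ := (hψ N R E hC).2
  have hsum : ∑ k ∈ N, φ N R E k = ∑ k ∈ N, ψ N R E k := by rw [hsumφ, hsumψ]
  have h2' : ∀ N R E, IsCompetition N R E → N.card = 2 → ∀ i ∈ N, ψ N R E i = φ N R E i :=
    fun N R E hC hc i hi => (h2 N R E hC hc i hi).symm
  -- find j with opposite strict inequality
  rcases lt_or_gt_of_ne hne with hlt | hgt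
  · -- φ i < ψ i, find j with φ j > ψ j
    have : ∃ j ∈ N, ψ N R E j < φ N R E j := by
      by_contra hall
      push_neg at hall
      have hstrict : ∑ k ∈ N, φ N R E k < ∑ k ∈ N, ψ N R E k :=
        Finset.sum_lt_sum hall ⟨i, hi, hlt⟩
      rw [hsum] at hstrict; exact lt_irrefl _ hstrict
    obtain ⟨j, hj, hjlt⟩ := this
    have hij : i ≠ j := fun h => by rw [h] at hlt; exact absurd hjlt (not_lt.2 hlt.le)
    have h1 := pair_sum_lt φ ψ hφ hψ hψm hφc hψc h2 hC hj hi hij.symm hjlt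
    have h2'' := pair_sum_lt ψ φ hψ hφ hφm hψc hφc h2' hC hi hj hij hlt
    linarith
  · have : ∃ j ∈ N, φ N R E j < ψ N R E j := by
      by_contra hall
      push_neg at hall
      have hstrict : ∑ k ∈ N, ψ N R E k < ∑ k ∈ N, φ N R E k :=
        Finset.sum_lt_sum hall ⟨i, hi, hgt⟩
      rw [hsum] at hstrict; exact lt_irrefl _ hstrict
    obtain ⟨j, hj, hjlt⟩ := this
    have hij : i ≠ j := fun h => by rw [h] at hgt; exact absurd hjlt (not_lt.2 hgt.le)
    have h1 := pair_sum_lt φ ψ hφ hψ hψm hφc hψc h2 hC hi hj hij hgt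
    have h2'' := pair_sum_lt ψ φ hψ hφ hφm hψc hφc h2' hC hj hi hij.symm hjlt
    linarith
end

section
/- A prize allocation rule satisfies anonymity, order preservation, winner strict endowment monotonicity, and local consistency if and only if it is a single-parametric rule. -/
open Finset
open scoped ENNReal

/-- `φ` is a single-parametric rule with representation `f`: `f : [0, ∞) → [0, ∞)` is
continuous, non-decreasing, with `f x ≤ x`, and for every competition there is `x ≥ 0`
with `∑_{k=1}^{|N|} f^{(k−1)}(x) = E` and the competitor at position `r` gets
`f^{(r−1)}(x)`. -/
def SingleParamRepr (φ : Rule) (f : ℝ → ℝ) : Prop :=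
  ContinuousOn f (Set.Ici 0) ∧ MonotoneOn f (Set.Ici 0) ∧
    (∀ x : ℝ, 0 ≤ x → 0 ≤ f x ∧ f x ≤ x) ∧
    ∀ N R E, IsCompetition N R E → ∃ x : ℝ, 0 ≤ x ∧
      (∑ k ∈ Finset.range N.card, f^[k] x) = E ∧
      ∀ i ∈ N, φ N R E i = f^[R i - 1] x

/-- A prize allocation rule is a single-parametric rule if it has some
single-parametric representation. -/
def IsSingleParametric (φ : Rule) : Prop :=
  ∃ f : ℝ → ℝ, SingleParamRepr φ f


open Finset

section Aux

variable {f : ℝ → ℝ}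

lemma iter_nonneg (hb : ∀ x : ℝ, 0 ≤ x → 0 ≤ f x ∧ f x ≤ x) :
    ∀ k : ℕ, ∀ x : ℝ, 0 ≤ x → 0 ≤ f^[k] x := by
  intro k
  induction k with
  | zero => intro x hx; simpa using hx
  | succ k ih =>
    intro x hx
    rw [Function.iterate_succ_apply]
    exact ih _ (hb x hx).1

lemma iter_mono (hm : MonotoneOn f (Set.Ici 0))
    (hb : ∀ x : ℝ, 0 ≤ x → 0 ≤ f x ∧ f x ≤ x) :
    ∀ k : ℕ, ∀ x y : ℝ, 0 ≤ x → x ≤ y → f^[k] x ≤ f^[k] y := by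
  intro k
  induction k with
  | zero => intro x y _ h; simpa using h
  | succ k ih =>
    intro x y hx hxy
    rw [Function.iterate_succ_apply, Function.iterate_succ_apply]
    exact ih _ _ (hb x hx).1 (hm (by exact hx) (le_trans hx hxy) hxy)

lemma iter_anti (hm : MonotoneOn f (Set.Ici 0))
    (hb : ∀ x : ℝ, 0 ≤ x → 0 ≤ f x ∧ f x ≤ x) :
    ∀ k l : ℕ, k ≤ l → ∀ x : ℝ, 0 ≤ x → f^[l] x ≤ f^[k] x := by
  intro k l hkl x hx
  induction l with
  | zero => interval_cases k; simp
  | succ l ih =>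
    rcases Nat.lt_or_ge k (l+1) with h | h
    · have h' : k ≤ l := Nat.lt_succ_iff.mp h
      refine le_trans ?_ (ih h')
      rw [Function.iterate_succ_apply]
      exact iter_mono hm hb l _ _ (hb x hx).1 (hb x hx).2
    · have : k = l + 1 := le_antisymm hkl h
      subst this; exact le_rfl

lemma sum_iter_termwise (hm : MonotoneOn f (Set.Ici 0))
    (hb : ∀ x : ℝ, 0 ≤ x → 0 ≤ f x ∧ f x ≤ x)
    {n : ℕ} {x y : ℝ} (hx : 0 ≤ x) (hy : 0 ≤ y)
    (hsum : ∑ k ∈ Finset.range n, f^[k] x = ∑ k ∈ Finset.range n, f^[k] y) :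
    ∀ k < n, f^[k] x = f^[k] y := by
  rcases le_total x y with hxy | hxy
  · have h := (Finset.sum_eq_sum_iff_of_le
      (fun k _ => iter_mono hm hb k x y hx hxy)).mp hsum
    intro k hk; exact h k (Finset.mem_range.mpr hk)
  · have h := (Finset.sum_eq_sum_iff_of_le
      (fun k _ => iter_mono hm hb k y x hy hxy)).mp hsum.symm
    intro k hk; exact (h k (Finset.mem_range.mpr hk)).symm

end Aux

section RankAux

lemma pair_ranking {a b : ℕ} (hab : a ≠ b) {g : ℕ → ℕ} (ha : g a = 1) (hb : g b = 2) :
    IsRanking {a, b} g := by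
  unfold IsRanking
  rw [Finset.card_pair hab]
  have hco : (↑({a, b} : Finset ℕ) : Set ℕ) = {a, b} := by simp
  rw [hco]
  refine ⟨?_, ?_, ?_⟩
  · intro x hx
    rcases hx with rfl | hx
    · simp [ha]
    · rcases hx with rfl
      simp [hb]
  · intro x hx y hy hxy
    rcases hx with rfl | hx <;> rcases hy with rfl | hy
    · rfl
    · rcases hy with rfl; rw [ha, hb] at hxy; omega
    · rcases hx with rfl; rw [ha, hb] at hxy; omega
    · rcases hx with rfl; rcases hy with rfl; rfl
  · intro r hr
    simp only [Set.mem_Icc] at hr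
    rcases hr with ⟨h1, h2⟩
    interval_cases r
    · exact ⟨a, Or.inl rfl, ha⟩
    · exact ⟨b, Or.inr rfl, hb⟩

lemma subRank_pair_left {i j : ℕ} {R : ℕ → ℕ} (hij : i ≠ j) (hR : R j = R i + 1) :
    subRank {i, j} R i = 1 := by
  unfold subRank
  have : ({i, j} : Finset ℕ).filter (fun k => R k ≤ R i) = {i} := by
    ext k
    simp only [Finset.mem_filter, Finset.mem_insert, Finset.mem_singleton]
    constructor
    · rintro ⟨rfl | rfl, h2⟩
      · rfl
      · omega
    · rintro rfl; exact ⟨Or.inl rfl, le_rfl⟩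
  rw [this, Finset.card_singleton]

lemma subRank_pair_right {i j : ℕ} {R : ℕ → ℕ} (hij : i ≠ j) (hR : R j = R i + 1) :
    subRank {i, j} R j = 2 := by
  unfold subRank
  have : ({i, j} : Finset ℕ).filter (fun k => R k ≤ R j) = {i, j} := by
    apply Finset.filter_true_of_mem
    intro k hk
    rcases Finset.mem_insert.mp hk with rfl | hk
    · omega
    · rw [Finset.mem_singleton.mp hk]
  rw [this, Finset.card_pair hij]

end RankAux

section Contig

lemma contiguous_subrank {N : Finset ℕ} {R : ℕ → ℕ} (hR : IsRanking N R)
    {S : Finset ℕ} (hS : S ⊆ N) (hne : S.Nonempty)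
    (hcont : ∀ i ∈ S, ∀ j ∈ S, |(R i : ℤ) - (R j : ℤ)| ≤ (S.card : ℤ) - 1) :
    ∃ m : ℕ, 1 ≤ m ∧
      (∀ i ∈ S, m ≤ R i ∧ R i + 1 ≤ m + S.card ∧ subRank S R i = R i - m + 1) ∧
      (∀ k : ℕ, m ≤ k → k + 1 ≤ m + S.card → ∃ i ∈ S, R i = k) ∧
      IsRanking S (subRank S R) := by
  classical
  have hinj : Set.InjOn R ↑S := hR.injOn.mono (by exact_mod_cast hS)
  set T : Finset ℕ := S.image R with hT
  have hTcard : T.card = S.card := Finset.card_image_of_injOn hinj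
  have hTne : T.Nonempty := hne.image _
  set m := T.min' hTne with hm
  set M := T.max' hTne with hM
  have hscard : 1 ≤ S.card := Finset.card_pos.mpr hne
  have hmM : M + 1 ≤ m + S.card := by
    obtain ⟨a, ha, hra⟩ := Finset.mem_image.mp (T.min'_mem hTne)
    obtain ⟨b, hb, hrb⟩ := Finset.mem_image.mp (T.max'_mem hTne)
    have := hcont b hb a ha
    rw [hra, hrb] at this
    have h2 : (M : ℤ) - m ≤ (S.card : ℤ) - 1 := le_trans (le_abs_self _) this
    omega
  have hsub : T ⊆ Finset.Icc m M := fun x hx =>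
    Finset.mem_Icc.mpr ⟨T.min'_le x hx, T.le_max' x hx⟩
  have hmleM : m ≤ M := T.min'_le M (T.max'_mem hTne)
  have hTIcc : T = Finset.Icc m M := by
    refine Finset.eq_of_subset_of_card_le hsub ?_
    rw [Nat.card_Icc, hTcard]; omega
  have hMeq : m + S.card = M + 1 := by
    have := hTcard
    rw [hTIcc, Nat.card_Icc] at this
    omega
  have h1m : 1 ≤ m := by
    obtain ⟨a, ha, hra⟩ := Finset.mem_image.mp (T.min'_mem hTne)
    have := (hR.mapsTo (by exact_mod_cast hS ha))
    rw [hra] at this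
    exact this.1
  have hmemT : ∀ i ∈ S, R i ∈ T := fun i hi => Finset.mem_image_of_mem R hi
  have hbounds : ∀ i ∈ S, m ≤ R i ∧ R i + 1 ≤ m + S.card := by
    intro i hi
    have := hsub (hmemT i hi)
    rw [Finset.mem_Icc] at this
    omega
  have hsurjT : ∀ k : ℕ, m ≤ k → k + 1 ≤ m + S.card → ∃ i ∈ S, R i = k := by
    intro k h1 h2
    have : k ∈ T := by rw [hTIcc, Finset.mem_Icc]; omega
    obtain ⟨i, hi, hri⟩ := Finset.mem_image.mp this
    exact ⟨i, hi, hri⟩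
  have hsubRank : ∀ i ∈ S, subRank S R i = R i - m + 1 := by
    intro i hi
    unfold subRank
    have himg : (S.filter (fun j => R j ≤ R i)).image R
        = T.filter (fun v => v ≤ R i) := by
      ext v
      simp only [Finset.mem_image, Finset.mem_filter, hT]
      constructor
      · rintro ⟨a, ⟨ha, hle⟩, rfl⟩
        exact ⟨⟨a, ha, rfl⟩, hle⟩
      · rintro ⟨⟨a, ha, rfl⟩, hle⟩
        exact ⟨a, ⟨ha, hle⟩, rfl⟩
    have hcardf : (S.filter (fun j => R j ≤ R i)).card
        = (T.filter (fun v => v ≤ R i)).card := by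
      rw [← himg]
      exact (Finset.card_image_of_injOn (hinj.mono (by
        intro x hx
        exact (Finset.mem_filter.mp hx).1))).symm
    rw [hcardf]
    have hbi := hbounds i hi
    have : T.filter (fun v => v ≤ R i) = Finset.Icc m (R i) := by
      rw [hTIcc]
      ext v
      simp only [Finset.mem_filter, Finset.mem_Icc]
      omega
    rw [this, Nat.card_Icc]
    omega
  refine ⟨m, h1m, fun i hi => ⟨(hbounds i hi).1, (hbounds i hi).2, hsubRank i hi⟩,
    hsurjT, ?_⟩
  unfold IsRanking
  refine ⟨?_, ?_, ?_⟩
  · intro i hi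
    have hi' : i ∈ S := hi
    rw [hsubRank i hi']
    have := hbounds i hi'
    simp only [Set.mem_Icc]
    omega
  · intro i hi j hj hij
    have hi' : i ∈ S := hi
    have hj' : j ∈ S := hj
    rw [hsubRank i hi', hsubRank j hj'] at hij
    have hbi := hbounds i hi'
    have hbj := hbounds j hj'
    exact hinj hi hj (by omega)
  · intro r hr
    simp only [Set.mem_Icc] at hr
    obtain ⟨i, hi, hri⟩ := hsurjT (m + r - 1) (by omega) (by omega)
    refine ⟨i, hi, ?_⟩
    rw [hsubRank i hi, hri]
    omega

end Contig

section Reverse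

lemma rank_bounds {N : Finset ℕ} {R : ℕ → ℕ} (hR : IsRanking N R) {i : ℕ}
    (hi : i ∈ N) : 1 ≤ R i ∧ R i ≤ N.card := by
  have := hR.mapsTo hi
  exact this

lemma reverse_direction (φ : Rule) (hrule : IsRule φ) (f : ℝ → ℝ)
    (hf : SingleParamRepr φ f) :
    Anonymous φ ∧ OrderPreserving φ ∧ WinnerStrictEndowMono φ ∧
      LocallyConsistent φ := by
  obtain ⟨hfc, hfm, hfb, hrep⟩ := hf
  have hfb' : ∀ x : ℝ, 0 ≤ x → 0 ≤ f x ∧ f x ≤ x := hfb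
  refine ⟨?_, ?_, ⟨?_, ?_⟩, ?_⟩
  · -- Anonymous
    intro N R N' R' E hc hc' hcard i hi j hj hij
    obtain ⟨x, hx0, hxs, hxv⟩ := hrep N R E hc
    obtain ⟨y, hy0, hys, hyv⟩ := hrep N' R' E hc'
    rw [hxv i hi, hyv j hj, hij]
    rw [hcard] at hxs
    have hb := rank_bounds hc'.2.1 hj
    exact sum_iter_termwise hfm hfb' hx0 hy0 (hxs.trans hys.symm) _ (by omega)
  · -- OrderPreserving
    intro N R E hc i hi j hj hlt
    obtain ⟨x, hx0, hxs, hxv⟩ := hrep N R E hc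
    rw [hxv i hi, hxv j hj]
    have hbi := rank_bounds hc.2.1 hi
    exact iter_anti hfm hfb' _ _ (by omega) x hx0
  · -- EndowMono
    intro N R E E' hc hc' hEE i hi
    obtain ⟨x, hx0, hxs, hxv⟩ := hrep N R E hc
    obtain ⟨y, hy0, hys, hyv⟩ := hrep N R E' hc'
    have hxy : x ≤ y := by
      by_contra h
      push_neg at h
      have : E' ≤ E := by
        rw [← hxs, ← hys]
        exact Finset.sum_le_sum fun k _ => iter_mono hfm hfb' k y x hy0 h.le
      linarith
    rw [hxv i hi, hyv i hi]
    exact iter_mono hfm hfb' _ x y hx0 hxy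
  · -- winner strict
    intro N R E E' hc hc' hEE i hi hri
    obtain ⟨x, hx0, hxs, hxv⟩ := hrep N R E hc
    obtain ⟨y, hy0, hys, hyv⟩ := hrep N R E' hc'
    have hxy : x ≤ y := by
      by_contra h
      push_neg at h
      have : E' ≤ E := by
        rw [← hxs, ← hys]
        exact Finset.sum_le_sum fun k _ => iter_mono hfm hfb' k y x hy0 h.le
      linarith
    have hxy' : x < y := by
      rcases lt_or_eq_of_le hxy with h | h
      · exact h
      · exfalso; rw [h] at hxs; rw [hxs] at hys; linarith
    rw [hxv i hi, hyv i hi, hri]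
    simpa using hxy'
  · -- LocallyConsistent
    intro N R E hc S hS hne hcont i hiS
    obtain ⟨x, hx0, hxs, hxv⟩ := hrep N R E hc
    obtain ⟨m, h1m, hmem, hsurj, hrankS⟩ :=
      contiguous_subrank hc.2.1 hS hne hcont
    set x' := f^[m - 1] x with hx'
    have hx'0 : 0 ≤ x' := iter_nonneg hfb' _ x hx0
    have hterm : ∀ j ∈ S, f^[R j - 1] x = f^[R j - m] x' := by
      intro j hj
      obtain ⟨h1, h2, h3⟩ := hmem j hj
      rw [hx', ← Function.iterate_add_apply]
      congr 1
      omega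
    have hinjS : Set.InjOn R ↑S := hc.2.1.injOn.mono (by exact_mod_cast hS)
    have hsumS : ∑ j ∈ S, φ N R E j = ∑ k ∈ Finset.range S.card, f^[k] x' := by
      rw [Finset.sum_congr rfl (fun j hj => by
        rw [hxv j (hS hj), hterm j hj])]
      refine Finset.sum_bij (fun a _ => R a - m) ?_ ?_ ?_ ?_
      · intro a ha
        obtain ⟨h1, h2, _⟩ := hmem a ha
        have : R a - m < S.card := by omega
        simpa using this
      · intro a ha b hb hab
        obtain ⟨h1, _, _⟩ := hmem a ha
        obtain ⟨h1', _, _⟩ := hmem b hb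
        exact hinjS ha hb (by omega)
      · intro b hb
        rw [Finset.mem_range] at hb
        obtain ⟨a, ha, hra⟩ := hsurj (b + m) (by omega) (by omega)
        exact ⟨a, ha, by omega⟩
      · intro a _; rfl
    have hcompS : IsCompetition S (subRank S R) (∑ j ∈ S, φ N R E j) :=
      ⟨hne, hrankS, Finset.sum_nonneg fun j hj =>
        (hrule N R E hc).1 j (hS hj)⟩
    obtain ⟨y, hy0, hys, hyv⟩ := hrep S (subRank S R) _ hcompS
    rw [hxv i (hS hiS), hyv i hiS]
    obtain ⟨h1, h2, h3⟩ := hmem i hiS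
    rw [h3]
    have hterms : ∀ k < S.card, f^[k] y = f^[k] x' :=
      sum_iter_termwise hfm hfb' hy0 hx'0 (by rw [hys, hsumS])
    have := hterms (R i - m) (by omega)
    rw [hterm i hiS]
    simp only [Nat.add_sub_cancel]
    exact (this).symm

section Forward

lemma forward_direction (φ : Rule) (hrule : IsRule φ) (hA : Anonymous φ)
    (hOP : OrderPreserving φ) (hWS : WinnerStrictEndowMono φ)
    (hLC : LocallyConsistent φ) : IsSingleParametric φ := by
  classical
  obtain ⟨hEM, hWstrict⟩ := hWS
  set N₂ : Finset ℕ := {0, 1} with hN₂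
  set R₂ : ℕ → ℕ := fun n => n + 1 with hR₂
  have h01 : (0 : ℕ) ≠ 1 := by norm_num
  have hcard₂ : N₂.card = 2 := Finset.card_pair h01
  have h0mem : (0 : ℕ) ∈ N₂ := Finset.mem_insert_self 0 {1}
  have h1mem : (1 : ℕ) ∈ N₂ := by simp [hN₂]
  have hrank₂ : IsRanking N₂ R₂ := pair_ranking h01 rfl rfl
  have hcomp₂ : ∀ E : ℝ, 0 ≤ E → IsCompetition N₂ R₂ E :=
    fun E hE => ⟨⟨0, h0mem⟩, hrank₂, hE⟩
  have hsum₂ : ∀ E : ℝ, 0 ≤ E → φ N₂ R₂ E 0 + φ N₂ R₂ E 1 = E := by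
    intro E hE
    have := (hrule N₂ R₂ E (hcomp₂ E hE)).2
    rwa [Finset.sum_pair h01] at this
  have hpos₀ : ∀ E : ℝ, 0 ≤ E → 0 ≤ φ N₂ R₂ E 0 :=
    fun E hE => (hrule N₂ R₂ E (hcomp₂ E hE)).1 0 h0mem
  have hpos₁ : ∀ E : ℝ, 0 ≤ E → 0 ≤ φ N₂ R₂ E 1 :=
    fun E hE => (hrule N₂ R₂ E (hcomp₂ E hE)).1 1 h1mem
  have hle₂ : ∀ E : ℝ, 0 ≤ E → φ N₂ R₂ E 1 ≤ φ N₂ R₂ E 0 :=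
    fun E hE => hOP N₂ R₂ E (hcomp₂ E hE) 0 h0mem 1 h1mem (by norm_num)
  set w : ℝ → ℝ := fun E => if E < 0 then E else φ N₂ R₂ E 0 with hw
  have hwval : ∀ E : ℝ, 0 ≤ E → w E = φ N₂ R₂ E 0 :=
    fun E hE => if_neg (not_lt.mpr hE)
  have hwlb : ∀ E : ℝ, 0 ≤ E → E / 2 ≤ w E := by
    intro E hE
    rw [hwval E hE]
    have := hsum₂ E hE
    have := hle₂ E hE
    linarith
  have hwub : ∀ E : ℝ, 0 ≤ E → w E ≤ E := by
    intro E hE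
    rw [hwval E hE]
    have := hsum₂ E hE
    have := hpos₁ E hE
    linarith
  have hwpos : ∀ E : ℝ, 0 ≤ E → 0 ≤ w E :=
    fun E hE => le_trans (by linarith) (hwlb E hE)
  have hw0 : w 0 = 0 := le_antisymm (hwub 0 le_rfl) (hwpos 0 le_rfl)
  have hwmono : ∀ E E' : ℝ, 0 ≤ E → E ≤ E' → w E ≤ w E' := by
    intro E E' hE hEE
    rcases eq_or_lt_of_le hEE with rfl | h
    · exact le_rfl
    · rw [hwval E hE, hwval E' (by linarith)]
      exact hEM N₂ R₂ E E' (hcomp₂ E hE) (hcomp₂ E' (by linarith)) h 0 h0mem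
  have hlmono : ∀ E E' : ℝ, 0 ≤ E → E ≤ E' →
      φ N₂ R₂ E 1 ≤ φ N₂ R₂ E' 1 := by
    intro E E' hE hEE
    rcases eq_or_lt_of_le hEE with rfl | h
    · exact le_rfl
    · exact hEM N₂ R₂ E E' (hcomp₂ E hE) (hcomp₂ E' (by linarith)) h 1 h1mem
  have hwstrict : ∀ E E' : ℝ, 0 ≤ E → E < E' → w E < w E' := by
    intro E E' hE h
    rw [hwval E hE, hwval E' (by linarith)]
    exact hWstrict N₂ R₂ E E' (hcomp₂ E hE) (hcomp₂ E' (by linarith)) h 0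
      h0mem rfl
  have hwsm : StrictMono w := by
    intro a b hab
    rcases lt_or_ge a 0 with ha | ha
    · rcases lt_or_ge b 0 with hb | hb
      · rw [show w a = a from if_pos ha, show w b = b from if_pos hb]
        exact hab
      · calc w a = a := if_pos ha
          _ < 0 := ha
          _ ≤ w b := hwpos b hb
    · exact hwstrict a b ha hab
  have hkey : ∀ a b : ℝ, a ≤ b → w b - w a ≤ b - a := by
    intro a b hab
    rcases lt_or_ge b 0 with hb | hb
    · rw [show w a = a from if_pos (lt_of_le_of_lt hab hb),
        show w b = b from if_pos hb]
    · rcases lt_or_ge a 0 with ha | ha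
      · rw [show w a = a from if_pos ha]
        have := hwub b hb
        linarith
      · have h1 := hlmono a b ha hab
        have h2 := hsum₂ a ha
        have h3 := hsum₂ b hb
        rw [hwval a ha, hwval b hb]
        linarith
  have hwlip : LipschitzWith 1 w := by
    apply LipschitzWith.of_dist_le_mul
    intro a b
    rw [Real.dist_eq, Real.dist_eq, NNReal.coe_one, one_mul]
    rcases le_total a b with h | h
    · have h1 := hkey a b h
      have h2 := hwsm.monotone h
      rw [abs_of_nonpos (by linarith), abs_of_nonpos (by linarith)]
      linarith
    · have h1 := hkey b a h
      have h2 := hwsm.monotone h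
      rw [abs_of_nonneg (by linarith), abs_of_nonneg (by linarith)]
      linarith
  have hwcont : Continuous w := hwlip.continuous
  have hwtop : Filter.Tendsto w Filter.atTop Filter.atTop := by
    refine Filter.tendsto_atTop_mono' Filter.atTop ?_
      (Filter.Tendsto.atTop_div_const two_pos Filter.tendsto_id)
    filter_upwards [Filter.eventually_ge_atTop (0 : ℝ)] with E hE
    exact hwlb E hE
  have hwbot : Filter.Tendsto w Filter.atBot Filter.atBot := by
    refine Filter.Tendsto.congr' ?_ Filter.tendsto_id
    filter_upwards [Filter.eventually_lt_atBot (0 : ℝ)] with E hE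
    exact (if_pos hE).symm
  have hwsurj : Function.Surjective w := hwcont.surjective hwtop hwbot
  set eIso : ℝ ≃o ℝ := StrictMono.orderIsoOfSurjective w hwsm hwsurj with heIso
  have hcoe : ⇑eIso = w := StrictMono.coe_orderIsoOfSurjective w hwsm hwsurj
  set ψ : ℝ → ℝ := ⇑eIso.symm with hψ
  have hψw : ∀ x : ℝ, ψ (w x) = x := by
    intro x
    rw [hψ, ← hcoe]
    exact eIso.symm_apply_apply x
  have hwψ : ∀ x : ℝ, w (ψ x) = x := by
    intro x
    rw [hψ, ← hcoe]
    exact eIso.apply_symm_apply x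
  have hψ0 : ψ 0 = 0 := by
    calc ψ 0 = ψ (w 0) := by rw [hw0]
      _ = 0 := hψw 0
  have hψmono : Monotone ψ := eIso.symm.monotone
  have hψcont : Continuous ψ := eIso.symm.continuous
  have hψnn : ∀ x : ℝ, 0 ≤ x → 0 ≤ ψ x := by
    intro x hx
    rw [← hψ0]
    exact hψmono hx
  set f : ℝ → ℝ := fun x => ψ x - x with hf
  have hfval : ∀ x : ℝ, 0 ≤ x → f x = φ N₂ R₂ (ψ x) 1 := by
    intro x hx
    have hE := hψnn x hx
    have h1 := hsum₂ (ψ x) hE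
    have h2 := hwψ x
    rw [hwval (ψ x) hE] at h2
    show ψ x - x = _
    linarith
  have hfbounds : ∀ x : ℝ, 0 ≤ x → 0 ≤ f x ∧ f x ≤ x := by
    intro x hx
    have hE := hψnn x hx
    have h2 := hwψ x
    rw [hwval (ψ x) hE] at h2
    rw [hfval x hx]
    exact ⟨hpos₁ (ψ x) hE, le_trans (hle₂ (ψ x) hE) (le_of_eq h2)⟩
  have hfmono : MonotoneOn f (Set.Ici 0) := by
    intro x hx y hy hxy
    rw [hfval x hx, hfval y hy]
    exact hlmono (ψ x) (ψ y) (hψnn x hx) (hψmono hxy)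
  have hfcont : ContinuousOn f (Set.Ici 0) :=
    (hψcont.sub continuous_id).continuousOn
  have hfw : ∀ E : ℝ, 0 ≤ E → f (w E) = E - w E := by
    intro E hE
    show ψ (w E) - w E = E - w E
    rw [hψw]
  -- the consecutive-pair step
  have hstep : ∀ N R E, IsCompetition N R E → ∀ i ∈ N, ∀ j ∈ N,
      R j = R i + 1 → φ N R E j = f (φ N R E i) := by
    intro N R E hc i hi j hj hR1
    have hij : i ≠ j := fun h => by rw [h] at hR1; omega
    set S : Finset ℕ := {i, j} with hS
    have hSsub : S ⊆ N := by
      intro k hk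
      rcases Finset.mem_insert.mp hk with rfl | hk
      · exact hi
      · rw [Finset.mem_singleton.mp hk]; exact hj
    have hSne : S.Nonempty := ⟨i, Finset.mem_insert_self i {j}⟩
    have hScard : S.card = 2 := Finset.card_pair hij
    have hjS : j ∈ S := by simp [hS]
    have hiS : i ∈ S := Finset.mem_insert_self i {j}
    have hcontig : ∀ a ∈ S, ∀ b ∈ S,
        |(R a : ℤ) - (R b : ℤ)| ≤ (S.card : ℤ) - 1 := by
      intro a ha b hb
      rw [hScard]
      have hva : R a = R i ∨ R a = R i + 1 := by
        rcases Finset.mem_insert.mp ha with rfl | ha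
        · exact Or.inl rfl
        · rw [Finset.mem_singleton.mp ha]; exact Or.inr hR1
      have hvb : R b = R i ∨ R b = R i + 1 := by
        rcases Finset.mem_insert.mp hb with rfl | hb
        · exact Or.inl rfl
        · rw [Finset.mem_singleton.mp hb]; exact Or.inr hR1
      rw [abs_le]
      constructor <;> omega
    have hLCi := hLC N R E hc S hSsub hSne hcontig i hiS
    have hLCj := hLC N R E hc S hSsub hSne hcontig j hjS
    set e' : ℝ := ∑ k ∈ S, φ N R E k with he'
    have hesum : e' = φ N R E i + φ N R E j := Finset.sum_pair hij
    have he0 : 0 ≤ e' := by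
      rw [hesum]
      exact add_nonneg ((hrule N R E hc).1 i hi) ((hrule N R E hc).1 j hj)
    have hsri : subRank S R i = 1 := subRank_pair_left hij hR1
    have hsrj : subRank S R j = 2 := subRank_pair_right hij hR1
    have hrankS : IsRanking S (subRank S R) := pair_ranking hij hsri hsrj
    have hcompS : IsCompetition S (subRank S R) e' := ⟨hSne, hrankS, he0⟩
    have hanon_i : φ S (subRank S R) e' i = φ N₂ R₂ e' 0 :=
      hA S (subRank S R) N₂ R₂ e' hcompS (hcomp₂ e' he0)
        (by rw [hScard, hcard₂]) i hiS 0 h0mem (by rw [hsri])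
    have hanon_j : φ S (subRank S R) e' j = φ N₂ R₂ e' 1 :=
      hA S (subRank S R) N₂ R₂ e' hcompS (hcomp₂ e' he0)
        (by rw [hScard, hcard₂]) j hjS 1 h1mem (by rw [hsrj])
    have hφi : φ N R E i = w e' := by
      rw [hLCi, hanon_i, hwval e' he0]
    have hφj : φ N R E j = e' - w e' := by
      rw [hLCj, hanon_j]
      have := hsum₂ e' he0
      rw [hwval e' he0] at *
      linarith
    rw [hφi, hφj, hfw e' he0]
  -- the representation
  refine ⟨f, hfcont, hfmono, hfbounds, ?_⟩
  intro N R E hc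
  have hn : 1 ≤ N.card := Finset.card_pos.mpr hc.1
  obtain ⟨i₀, hi₀, hr₀⟩ := hc.2.1.surjOn (Set.mem_Icc.mpr ⟨le_rfl, hn⟩)
  have hi₀' : i₀ ∈ N := hi₀
  set x : ℝ := φ N R E i₀ with hx
  have hx0 : 0 ≤ x := (hrule N R E hc).1 i₀ hi₀'
  have hclaim : ∀ k : ℕ, ∀ i ∈ N, R i = k + 1 → φ N R E i = f^[k] x := by
    intro k
    induction k with
    | zero =>
      intro i hi hri
      have : i = i₀ := hc.2.1.injOn hi hi₀ (by rw [hri, hr₀])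
      rw [this]
      simp [hx]
    | succ k ih =>
      intro i hi hri
      have hk1 : (k + 1 : ℕ) ∈ Set.Icc 1 N.card := by
        have := (rank_bounds hc.2.1 hi).2
        simp only [Set.mem_Icc]
        omega
      obtain ⟨j, hj, hrj⟩ := hc.2.1.surjOn hk1
      have hj' : j ∈ N := hj
      have hstepij := hstep N R E hc j hj' i hi (by omega)
      rw [hstepij, ih j hj' hrj, Function.iterate_succ_apply']
  have hrep : ∀ i ∈ N, φ N R E i = f^[R i - 1] x := by
    intro i hi
    have hb := rank_bounds hc.2.1 hi
    exact hclaim (R i - 1) i hi (by omega)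
  refine ⟨x, hx0, ?_, hrep⟩
  rw [← (hrule N R E hc).2]
  symm
  refine Finset.sum_bij (fun a _ => R a - 1) ?_ ?_ ?_ ?_
  · intro a ha
    have hb := rank_bounds hc.2.1 ha
    have : R a - 1 < N.card := by omega
    simpa using this
  · intro a ha b hb hab
    have hba := rank_bounds hc.2.1 ha
    have hbb := rank_bounds hc.2.1 hb
    exact hc.2.1.injOn ha hb (by omega)
  · intro b hb
    rw [Finset.mem_range] at hb
    obtain ⟨a, ha, hra⟩ := hc.2.1.surjOn
      (Set.mem_Icc.mpr ⟨Nat.le_add_left 1 b, by omega⟩ : b + 1 ∈ Set.Icc 1 N.card)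
    exact ⟨a, ha, by omega⟩
  · intro a ha
    exact hrep a ha

end Forward

/-- A prize allocation rule satisfies anonymity, order preservation, winner strict
endowment monotonicity, and local consistency if and only if it is a
single-parametric rule. -/
theorem singleParametric_characterization (φ : Rule) (hrule : IsRule φ) :
    (Anonymous φ ∧ OrderPreserving φ ∧ WinnerStrictEndowMono φ ∧
      LocallyConsistent φ) ↔ IsSingleParametric φ := by
  constructor
  · rintro ⟨hA, hOP, hWS, hLC⟩
    exact forward_direction φ hrule hA hOP hWS hLC
  · rintro ⟨f, hf⟩
    exact reverse_direction φ hrule f hf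
end Reverse
end

section
/- A single-parametric rule with representation f satisfies winner-loser strict order preservation if and only if f(x) < x for each x > 0. -/
open Finset
open scoped ENNReal

/-- A single-parametric rule with representation `f` satisfies winner-loser strict
order preservation if and only if `f x < x` for each `x > 0`. -/
theorem singleParametric_wlsop_iff (φ : Rule) (f : ℝ → ℝ) (hrule : IsRule φ)
    (hrep : SingleParamRepr φ f) :
    WinnerLoserStrictOP φ ↔ ∀ x : ℝ, 0 < x → f x < x := by
  obtain ⟨hcont, hmono, hbd, hex⟩ := hrep
  have hiter0 : ∀ x : ℝ, 0 ≤ x → ∀ k, 0 ≤ f^[k] x := by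
    intro x hx k
    induction k with
    | zero => simpa
    | succ n ih => rw [Function.iterate_succ_apply']; exact (hbd _ ih).1
  have hiterle : ∀ x : ℝ, 0 ≤ x → ∀ k, f^[k + 1] x ≤ f^[k] x := by
    intro x hx k
    rw [Function.iterate_succ_apply']; exact (hbd _ (hiter0 x hx k)).2
  have hanti : ∀ x : ℝ, 0 ≤ x → ∀ m n, m ≤ n → f^[n] x ≤ f^[m] x := by
    intro x hx m n h
    induction n, h using Nat.le_induction with
    | base => exact le_refl _
    | succ n hn ih => exact le_trans (hiterle x hx n) ih
  constructor
  · -- forward direction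
    intro h x hx
    rcases lt_or_eq_of_le (hbd x hx.le).2 with hlt | heq
    · exact hlt
    exfalso
    set N : Finset ℕ := {0, 1} with hN
    set R : ℕ → ℕ := fun i => i + 1 with hR
    have hcard : N.card = 2 := by decide
    have hrank : IsRanking N R := by
      rw [IsRanking, hcard]
      refine ⟨?_, ?_, ?_⟩
      · intro i hi
        simp only [hN, Finset.coe_insert, Finset.coe_singleton, Set.mem_insert_iff,
          Set.mem_singleton_iff] at hi
        simp only [Set.mem_Icc, hR]; omega
      · intro a _ b _ hab
        simpa [hR] using hab
      · intro y hy
        simp only [Set.mem_Icc] at hy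
        refine ⟨y - 1, ?_, ?_⟩
        · simp only [hN, Finset.coe_insert, Finset.coe_singleton, Set.mem_insert_iff,
            Set.mem_singleton_iff]
          omega
        · simp only [hR]; omega
    have hcomp : IsCompetition N R (2 * x) := ⟨⟨0, by decide⟩, hrank, by linarith⟩
    obtain ⟨x', hx'0, hsum, hval⟩ := hex N R (2 * x) hcomp
    have hsum' : x' + f x' = 2 * x := by
      rw [hcard] at hsum
      simpa [Finset.sum_range_succ] using hsum
    have h0 : (0 : ℕ) ∈ N := by decide
    have h1 : (1 : ℕ) ∈ N := by decide
    have hstrict := h.2 N R (2 * x) hcomp (by linarith) 0 h0 1 h1 (by decide)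
      (by simp [hR]) (by simp [hR, hcard])
    rw [hval 0 h0, hval 1 h1] at hstrict
    simp only [hR] at hstrict
    norm_num [Function.iterate_one] at hstrict
    -- hstrict : f x' < x'
    have hfx'lt : f x' < x := by linarith
    have hxlt : x < x' := by linarith
    have := hmono (Set.mem_Ici.mpr hx.le) (Set.mem_Ici.mpr hx'0) hxlt.le
    rw [heq] at this
    linarith
  · -- backward direction
    intro hf
    have hOP : OrderPreserving φ := by
      intro N R E hcomp i hi j hj hij
      obtain ⟨x, hx0, hsum, hval⟩ := hex N R E hcomp
      rw [hval i hi, hval j hj]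
      exact hanti x hx0 _ _ (by omega)
    refine ⟨hOP, ?_⟩
    intro N R E hcomp hE i hi j hj hij hRi hRj
    obtain ⟨x, hx0, hsum, hval⟩ := hex N R E hcomp
    have hcard2 : 2 ≤ N.card := Finset.one_lt_card.mpr ⟨i, hi, j, hj, hij⟩
    have hxpos : 0 < x := by
      by_contra hle
      have hx0' : x = 0 := le_antisymm (not_lt.mp hle) hx0
      have : ∀ k ∈ Finset.range N.card, f^[k] x ≤ 0 := by
        intro k _
        calc f^[k] x ≤ f^[0] x := hanti x hx0 0 k (Nat.zero_le k)
        _ = 0 := by simp [hx0']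
      have hsle : ∑ k ∈ Finset.range N.card, f^[k] x ≤ 0 :=
        Finset.sum_nonpos this
      rw [hsum] at hsle
      linarith
    rw [hval i hi, hval j hj, hRi, hRj]
    calc f^[N.card - 1] x ≤ f^[1] x := hanti x hx0 1 (N.card - 1) (by omega)
      _ = f x := Function.iterate_one f ▸ rfl
      _ < x := hf x hxpos
      _ = f^[1 - 1] x := by simp
end

section
/- A single-parametric rule with representation f satisfies strict order preservation if and only if 0 < f(x) < x for each x > 0. -/
open Finset
open scoped ENNReal

/-- A single-parametric rule with representation `f` satisfies strict order
preservation if and only if `0 < f x < x` for each `x > 0`. -/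
theorem singleParametric_sop_iff (φ : Rule) (f : ℝ → ℝ) (hrule : IsRule φ)
    (hrep : SingleParamRepr φ f) :
    StrictOrderPreserving φ ↔ ∀ x : ℝ, 0 < x → 0 < f x ∧ f x < x := by

  obtain ⟨hcont, hmono, hbd, hrepr⟩ := hrep
  have hfnn : ∀ x : ℝ, 0 ≤ x → 0 ≤ f x := fun x hx => (hbd x hx).1
  have hfle : ∀ x : ℝ, 0 ≤ x → f x ≤ x := fun x hx => (hbd x hx).2
  have hf0 : f 0 = 0 := le_antisymm (hfle 0 le_rfl) (hfnn 0 le_rfl)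
  have hiter : ∀ k : ℕ, ∀ x : ℝ, 0 ≤ x → 0 ≤ f^[k] x ∧ f^[k] x ≤ x := by
    intro k
    induction k with
    | zero => intro x hx; simp [hx]
    | succ k ih =>
      intro x hx
      rw [Function.iterate_succ_apply']
      obtain ⟨h1, h2⟩ := ih x hx
      exact ⟨hfnn _ h1, le_trans (hfle _ h1) h2⟩
  -- ranking fun i => i + 1 on {0,...,n-1}
  have hrank : ∀ n : ℕ, 0 < n → IsRanking (Finset.range n) (fun i => i + 1) := by
    intro n hn
    refine ⟨?_, ?_, ?_⟩
    · intro i hi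
      simp only [Finset.coe_range, Set.mem_Iio] at hi
      simp only [Finset.card_range, Set.mem_Icc]
      omega
    · intro a _ b _ h; simpa using h
    · intro y hy
      simp only [Finset.card_range, Set.mem_Icc] at hy
      refine ⟨y - 1, ?_, ?_⟩
      · simp only [Finset.coe_range, Set.mem_Iio]; omega
      · simp only; omega
  constructor
  · intro hsop x hx
    have h2 : ∀ E : ℝ, 0 < E → ∃ y : ℝ, 0 ≤ y ∧ y + f y = E ∧ f y < y := by
      intro E hE
      have hcomp : IsCompetition (Finset.range 2) (fun i => i + 1) E :=
        ⟨⟨0, by simp⟩, hrank 2 (by norm_num), le_of_lt hE⟩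
      obtain ⟨y, hy0, hsum, hφ⟩ := hrepr _ _ _ hcomp
      simp only [Finset.card_range, Finset.sum_range_succ, Finset.sum_range_zero,
        Function.iterate_zero_apply, Function.iterate_one, zero_add] at hsum
      have hlt := hsop _ _ _ hcomp hE 0 (by simp) 1 (by simp) (by norm_num)
      rw [hφ 0 (by simp), hφ 1 (by simp)] at hlt
      norm_num at hlt
      exact ⟨y, hy0, hsum, hlt⟩
    have hlt : f x < x := by
      rcases lt_or_eq_of_le (hfle x hx.le) with h | h
      · exact h
      · exfalso
        have hE : (0:ℝ) < x + f x := by linarith [hfnn x hx.le]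
        obtain ⟨y, hy0, hsum, hfy⟩ := h2 _ hE
        rw [h] at hsum
        have hxy : x ≤ y := by linarith
        have := hmono hx.le (le_trans hx.le hxy) hxy
        linarith
    refine ⟨?_, hlt⟩
    by_contra hle
    push_neg at hle
    have hfx : f x = 0 := le_antisymm hle (hfnn x hx.le)
    have hcomp : IsCompetition (Finset.range 3) (fun i => i + 1) x :=
      ⟨⟨0, by simp⟩, hrank 3 (by norm_num), hx.le⟩
    obtain ⟨y, hy0, hsum, hφ⟩ := hrepr _ _ _ hcomp
    simp only [Finset.card_range, Finset.sum_range_succ, Finset.sum_range_zero,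
      zero_add] at hsum
    have hlt := hsop _ _ _ hcomp hx 1 (by simp) 2 (by simp) (by norm_num)
    rw [hφ 1 (by simp), hφ 2 (by simp)] at hlt
    have h1 : 0 ≤ f^[1] y := (hiter 1 y hy0).1
    have h2' : 0 ≤ f^[2] y := (hiter 2 y hy0).1
    have hyx : y ≤ x := by
      simp only [Function.iterate_zero_apply] at hsum; linarith
    have hfy : f y ≤ f x := hmono hy0 hx.le hyx
    have hfy0 : f y = 0 := le_antisymm (hfx ▸ hfy) (hfnn y hy0)
    norm_num [Function.iterate_succ_apply', hfy0, hf0] at hlt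
  · intro hstrict N R E hcomp hE i hi j hj hij
    obtain ⟨x, hx0, hsum, hφ⟩ := hrepr N R E hcomp
    have hxpos : 0 < x := by
      rcases lt_or_eq_of_le hx0 with h | h
      · exact h
      · exfalso
        have hiter0 : ∀ k : ℕ, f^[k] (0:ℝ) = 0 := by
          intro k
          induction k with
          | zero => simp
          | succ k ih => rw [Function.iterate_succ_apply', ih, hf0]
        rw [← h] at hsum
        simp only [hiter0] at hsum
        simp at hsum
        linarith
    have hpos : ∀ k : ℕ, 0 < f^[k] x := by
      intro k
      induction k with
      | zero => simpa
      | succ k ih =>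
        rw [Function.iterate_succ_apply']
        exact (hstrict _ ih).1
    have hanti : StrictAnti (fun k : ℕ => f^[k] x) := by
      apply strictAnti_nat_of_succ_lt
      intro n
      simp only [Function.iterate_succ_apply']
      exact (hstrict _ (hpos n)).2
    have hRi : 1 ≤ R i := (hcomp.2.1.1 (by exact_mod_cast hi)).1
    rw [hφ i hi, hφ j hj]
    exact hanti (by omega)
end

section
/- A prize allocation rule satisfies anonymity, order preservation, winner strict endowment monotonicity, and top consistency if and only if it is a parametric rule. -/
open Finset
open scoped ENNReal

/-- `φ` is a parametric rule with representation `f 1, f 2, …` (the value `f 0` is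
irrelevant): the `f k : [0, ∞) → [0, ∞)` are continuous, non-decreasing, with
`f 1 x = x` and `f (k+1) x ≤ f k x`, and for every competition there is `x ≥ 0`
with `∑_{k=1}^{|N|} f k x = E` and the competitor at position `r` gets `f r x`. -/
def ParamRepr (φ : Rule) (f : ℕ → ℝ → ℝ) : Prop :=
  (∀ k, 1 ≤ k → ContinuousOn (f k) (Set.Ici 0) ∧ MonotoneOn (f k) (Set.Ici 0) ∧
    ∀ x : ℝ, 0 ≤ x → 0 ≤ f k x) ∧
  (∀ x : ℝ, 0 ≤ x → f 1 x = x) ∧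
  (∀ k, 1 ≤ k → ∀ x : ℝ, 0 ≤ x → f (k + 1) x ≤ f k x) ∧
  ∀ N R E, IsCompetition N R E → ∃ x : ℝ, 0 ≤ x ∧
    (∑ k ∈ Finset.Icc 1 N.card, f k x) = E ∧
    ∀ i ∈ N, φ N R E i = f (R i) x

/-- A prize allocation rule is a parametric rule if it has some parametric
representation. -/
def IsParametric (φ : Rule) : Prop :=
  ∃ f : ℕ → ℝ → ℝ, ParamRepr φ f

/- ====== auxiliary lemmas ====== -/

section Aux
variable {φ : Rule} {f : ℕ → ℝ → ℝ}

/-- chain of decreasing prizes -/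
lemma f_anti (hf : ParamRepr φ f) :
    ∀ a b, 1 ≤ a → a ≤ b → ∀ x : ℝ, 0 ≤ x → f b x ≤ f a x := by
  intro a b ha hab x hx
  induction b, hab using Nat.le_induction with
  | base => exact le_rfl
  | succ n hn ih => exact le_trans (hf.2.2.1 n (le_trans ha hn) x hx) ih

/-- the sum map is strictly monotone on the parameter -/
lemma sum_strictMonoOn (hf : ParamRepr φ f) (n : ℕ) (hn : 1 ≤ n) :
    StrictMonoOn (fun x => ∑ k ∈ Finset.Icc 1 n, f k x) (Set.Ici 0) := by
  intro x hx y hy hxy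
  apply Finset.sum_lt_sum
  · intro k hk
    exact (hf.1 k (Finset.mem_Icc.mp hk).1).2.1 hx hy (le_of_lt hxy)
  · refine ⟨1, Finset.mem_Icc.mpr ⟨le_refl 1, hn⟩, ?_⟩
    rw [hf.2.1 x hx, hf.2.1 y hy]; exact hxy

/-- parameter uniqueness -/
lemma param_unique (hf : ParamRepr φ f) (n : ℕ) (hn : 1 ≤ n) {x y : ℝ}
    (hx : 0 ≤ x) (hy : 0 ≤ y)
    (h : (∑ k ∈ Finset.Icc 1 n, f k x) = ∑ k ∈ Finset.Icc 1 n, f k y) : x = y :=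
  (sum_strictMonoOn hf n hn).injOn hx hy h

lemma backward_aux (φ : Rule) (hrule : IsRule φ) (hp : IsParametric φ) :
    Anonymous φ ∧ OrderPreserving φ ∧ WinnerStrictEndowMono φ ∧ TopConsistent φ := by
  obtain ⟨f, hf⟩ := hp
  have hcard1 : ∀ {N : Finset ℕ} {R E}, IsCompetition N R E → 1 ≤ N.card := by
    intro N R E h
    exact Finset.card_pos.mpr h.1
  have hrank1 : ∀ {N : Finset ℕ} {R E}, IsCompetition N R E → ∀ i ∈ N,
      1 ≤ R i ∧ R i ≤ N.card := by
    intro N R E h i hi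
    have := h.2.1.1 hi
    exact ⟨this.1, this.2⟩
  refine ⟨?_, ?_, ⟨?_, ?_⟩, ?_⟩
  · -- Anonymous
    intro N R N' R' E hc hc' hcard i hi j hj hR
    obtain ⟨x, hx0, hxsum, hxval⟩ := hf.2.2.2 N R E hc
    obtain ⟨y, hy0, hysum, hyval⟩ := hf.2.2.2 N' R' E hc'
    have hxy : x = y := by
      apply param_unique hf N.card (hcard1 hc) hx0 hy0
      rw [hxsum]; rw [hcard, hysum]
    rw [hxval i hi, hyval j hj, hR, hxy]
  · -- OrderPreserving
    intro N R E hc i hi j hj hij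
    obtain ⟨x, hx0, hxsum, hxval⟩ := hf.2.2.2 N R E hc
    rw [hxval i hi, hxval j hj]
    exact f_anti hf (R i) (R j) (hrank1 hc i hi).1 (le_of_lt hij) x hx0
  · -- EndowMono
    intro N R E E' hc hc' hEE' i hi
    obtain ⟨x, hx0, hxsum, hxval⟩ := hf.2.2.2 N R E hc
    obtain ⟨y, hy0, hysum, hyval⟩ := hf.2.2.2 N R E' hc'
    have hxy : x ≤ y := by
      by_contra hcon
      push_neg at hcon
      have := sum_strictMonoOn hf N.card (hcard1 hc) hy0 hx0 hcon
      simp only [hxsum, hysum] at this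
      linarith
    rw [hxval i hi, hyval i hi]
    exact (hf.1 (R i) (hrank1 hc i hi).1).2.1 hx0 hy0 hxy
  · -- winner strict
    intro N R E E' hc hc' hEE' i hi hRi
    obtain ⟨x, hx0, hxsum, hxval⟩ := hf.2.2.2 N R E hc
    obtain ⟨y, hy0, hysum, hyval⟩ := hf.2.2.2 N R E' hc'
    have hxy : x < y := by
      rcases lt_trichotomy x y with h | h | h
      · exact h
      · exfalso; rw [h, hysum] at hxsum; linarith
      · exfalso
        have := sum_strictMonoOn hf N.card (hcard1 hc) hy0 hx0 h
        simp only [hxsum, hysum] at this; linarith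
    rw [hxval i hi, hyval i hi, hRi, hf.2.1 x hx0, hf.2.1 y hy0]
    exact hxy
  · -- TopConsistent
    intro N R E hc S hSN hS htop i hiS
    obtain ⟨x, hx0, hxsum, hxval⟩ := hf.2.2.2 N R E hc
    have hs1 : 1 ≤ S.card := Finset.card_pos.mpr hS
    -- image of S under R is Icc 1 S.card
    have hinj : Set.InjOn R ↑S := hc.2.1.2.1.mono (by exact_mod_cast hSN)
    have himage : S.image R = Finset.Icc 1 S.card := by
      apply Finset.eq_of_subset_of_card_le
      · intro k hk
        obtain ⟨j, hjS, rfl⟩ := Finset.mem_image.mp hk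
        exact Finset.mem_Icc.mpr ⟨(hrank1 hc j (hSN hjS)).1, htop j hjS⟩
      · rw [Finset.card_image_of_injOn hinj, Nat.card_Icc]; omega
    -- subRank S R agrees with R on S
    have hsub : ∀ i ∈ S, subRank S R i = R i := by
      intro i hiS
      unfold subRank
      have h1 : (S.filter fun j => R j ≤ R i).card
          = ((S.filter fun j => R j ≤ R i).image R).card :=
        (Finset.card_image_of_injOn (hinj.mono (by
          intro a ha; exact Finset.mem_filter.mp ha |>.1))).symm
      rw [h1]
      have h2 : (S.filter fun j => R j ≤ R i).image R
          = (S.image R).filter (fun k => k ≤ R i) := by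
        rw [Finset.filter_image]
      rw [h2, himage]
      have hRi : 1 ≤ R i ∧ R i ≤ S.card := ⟨(hrank1 hc i (hSN hiS)).1, htop i hiS⟩
      have : (Finset.Icc 1 S.card).filter (fun k => k ≤ R i) = Finset.Icc 1 (R i) := by
        ext k
        simp only [Finset.mem_filter, Finset.mem_Icc]
        omega
      rw [this, Nat.card_Icc]
      omega
    -- (S, subRank S R, E_S) is a competition
    have hES : (0:ℝ) ≤ ∑ j ∈ S, φ N R E j :=
      Finset.sum_nonneg fun j hj => (hrule N R E hc).1 j (hSN hj)
    have hrankS : IsRanking S (subRank S R) := by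
      have hbij : Set.BijOn R ↑S (Set.Icc 1 S.card) := by
        refine ⟨?_, hinj, ?_⟩
        · intro j hj
          exact Set.mem_Icc.mpr ⟨(hrank1 hc j (hSN hj)).1, htop j hj⟩
        · intro k hk
          have : k ∈ S.image R := by
            rw [himage]
            exact Finset.mem_Icc.mpr (Set.mem_Icc.mp hk)
          obtain ⟨j, hjS, hjk⟩ := Finset.mem_image.mp this
          exact ⟨j, hjS, hjk⟩
      exact hbij.congr (fun j hj => (hsub j hj).symm)
    have hcS : IsCompetition S (subRank S R) (∑ j ∈ S, φ N R E j) := ⟨hS, hrankS, hES⟩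
    obtain ⟨y, hy0, hysum, hyval⟩ := hf.2.2.2 S (subRank S R) _ hcS
    have hsumS : (∑ j ∈ S, φ N R E j) = ∑ k ∈ Finset.Icc 1 S.card, f k x := by
      rw [← himage, Finset.sum_image (fun a ha b hb => hinj ha hb)]
      exact Finset.sum_congr rfl fun j hj => hxval j (hSN hj)
    have hxy : y = x := by
      apply param_unique hf S.card hs1 hy0 hx0
      rw [hysum, hsumS]
    rw [hyval i hiS, hsub i hiS, hxy, hxval i (hSN hiS)]

end Aux

/- ===== forward direction ===== -/

/-- the standard ranking on `range n` -/
def stdR (i : ℕ) : ℕ := i + 1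

lemma isRanking_std (n : ℕ) : IsRanking (Finset.range n) stdR := by
  unfold IsRanking stdR
  rw [Finset.card_range]
  refine ⟨?_, ?_, ?_⟩
  · intro i hi
    simp only [Finset.coe_range, Set.mem_Iio] at hi
    simp only [Set.mem_Icc]
    omega
  · intro a _ b _ h
    simpa using h
  · intro k hk
    simp only [Set.mem_Icc] at hk
    refine ⟨k - 1, ?_, ?_⟩
    · simp only [Finset.coe_range, Set.mem_Iio]
      omega
    · show k - 1 + 1 = k
      omega

lemma isComp_std (n : ℕ) (hn : 1 ≤ n) (E : ℝ) (hE : 0 ≤ E) :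
    IsCompetition (Finset.range n) stdR E :=
  ⟨Finset.nonempty_range_iff.mpr (by omega), isRanking_std n, hE⟩

lemma subRank_range (r i : ℕ) (hi : i < r) :
    subRank (Finset.range r) stdR i = i + 1 := by
  unfold subRank stdR
  have h : (Finset.range r).filter (fun j => j + 1 ≤ i + 1) = Finset.range (i + 1) := by
    ext j
    simp only [Finset.mem_filter, Finset.mem_range]
    omega
  rw [h, Finset.card_range]

lemma forward_aux (φ : Rule) (hrule : IsRule φ) (hanon : Anonymous φ)
    (hop : OrderPreserving φ) (hwm : WinnerStrictEndowMono φ)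
    (htc : TopConsistent φ) : IsParametric φ := by
  -- zero endowment gives zero prizes
  have hzero : ∀ N R, IsCompetition N R 0 → ∀ i ∈ N, φ N R 0 i = 0 := by
    intro N R hc i hi
    obtain ⟨hnn, hsum⟩ := hrule N R 0 hc
    exact (Finset.sum_eq_zero_iff_of_nonneg hnn).mp hsum i hi
  -- weak endowment monotonicity
  have mono' : ∀ N R E E', IsCompetition N R E → IsCompetition N R E' → E ≤ E' →
      ∀ i ∈ N, φ N R E i ≤ φ N R E' i := by
    intro N R E E' hc hc' hEE' i hi
    rcases eq_or_lt_of_le hEE' with h | h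
    · rw [h]
    · exact hwm.1 N R E E' hc hc' h i hi
  -- 1-Lipschitz in the endowment
  have lip : ∀ N R E E', IsCompetition N R E → IsCompetition N R E' → E ≤ E' →
      ∀ i ∈ N, φ N R E' i - φ N R E i ≤ E' - E := by
    intro N R E E' hc hc' hEE' i hi
    have hsum : (∑ j ∈ N, (φ N R E' j - φ N R E j)) = E' - E := by
      rw [Finset.sum_sub_distrib, (hrule N R E hc).2, (hrule N R E' hc').2]
    rw [← hsum]
    exact Finset.single_le_sum
      (fun j hj => sub_nonneg.mpr (mono' N R E E' hc hc' hEE' j hj)) hi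
  set G : ℕ → ℝ → ℝ := fun n E => φ (Finset.range n) stdR E 0 with hG
  have hmem0 : ∀ n : ℕ, 1 ≤ n → 0 ∈ Finset.range n := by
    intro n hn; exact Finset.mem_range.mpr (by omega)
  have G_nonneg : ∀ n, 1 ≤ n → ∀ E, 0 ≤ E → 0 ≤ G n E := by
    intro n hn E hE
    exact (hrule _ _ _ (isComp_std n hn E hE)).1 0 (hmem0 n hn)
  -- the winner gets the maximum
  have winner_max : ∀ n, 1 ≤ n → ∀ E, 0 ≤ E → ∀ j ∈ Finset.range n,
      φ (Finset.range n) stdR E j ≤ G n E := by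
    intro n hn E hE j hj
    rcases Nat.eq_zero_or_pos j with h | h
    · rw [h]
    · exact hop _ _ _ (isComp_std n hn E hE) 0 (hmem0 n hn) j hj (by unfold stdR; omega)
  have G_lb : ∀ n, 1 ≤ n → ∀ E, 0 ≤ E → E ≤ n * G n E := by
    intro n hn E hE
    have h1 : E = ∑ j ∈ Finset.range n, φ (Finset.range n) stdR E j :=
      ((hrule _ _ _ (isComp_std n hn E hE)).2).symm
    calc E = ∑ j ∈ Finset.range n, φ (Finset.range n) stdR E j := h1
    _ ≤ ∑ _j ∈ Finset.range n, G n E :=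
        Finset.sum_le_sum (winner_max n hn E hE)
    _ = n * G n E := by rw [Finset.sum_const, Finset.card_range, nsmul_eq_mul]
  have G_contOn : ∀ n, 1 ≤ n → ContinuousOn (G n) (Set.Ici 0) := by
    intro n hn
    have : LipschitzOnWith 1 (G n) (Set.Ici 0) := by
      rw [lipschitzOnWith_iff_dist_le_mul]
      intro x hx y hy
      simp only [Set.mem_Ici] at hx hy
      rcases le_total x y with h | h
      · have h1 := lip _ _ _ _ (isComp_std n hn x hx) (isComp_std n hn y hy) h 0 (hmem0 n hn)
        have h2 := mono' _ _ _ _ (isComp_std n hn x hx) (isComp_std n hn y hy) h 0 (hmem0 n hn)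
        rw [Real.dist_eq, Real.dist_eq]
        rw [abs_sub_comm, abs_of_nonneg (by linarith), abs_sub_comm, abs_of_nonneg (by linarith)]
        push_cast
        linarith
      · have h1 := lip _ _ _ _ (isComp_std n hn y hy) (isComp_std n hn x hx) h 0 (hmem0 n hn)
        have h2 := mono' _ _ _ _ (isComp_std n hn y hy) (isComp_std n hn x hx) h 0 (hmem0 n hn)
        rw [Real.dist_eq, Real.dist_eq]
        rw [abs_of_nonneg (by linarith), abs_of_nonneg (by linarith)]
        push_cast
        linarith
    exact this.continuousOn
  have G_zero : ∀ n, 1 ≤ n → G n 0 = 0 := by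
    intro n hn
    exact hzero _ _ (isComp_std n hn 0 le_rfl) 0 (hmem0 n hn)
  -- surjectivity of `G n` onto `[0,∞)` via IVT
  have hex : ∀ (n : ℕ) (x : ℝ), ∃ E, 0 ≤ E ∧ (1 ≤ n → 0 ≤ x → G n E = x) := by
    intro n x
    by_cases hn : 1 ≤ n
    · by_cases hx : 0 ≤ x
      · have hnx : (0:ℝ) ≤ n * x := by positivity
        have hc : ContinuousOn (G n) (Set.Icc 0 (n * x)) :=
          (G_contOn n hn).mono (Set.Icc_subset_Ici_self)
        have hmem : x ∈ Set.Icc (G n 0) (G n (n * x)) := by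
          constructor
          · rw [G_zero n hn]; exact hx
          · have := G_lb n hn (n * x) hnx
            have hn' : (1:ℝ) ≤ n := by exact_mod_cast hn
            nlinarith [G_nonneg n hn (n*x) hnx]
        obtain ⟨E, hE, hGE⟩ := intermediate_value_Icc hnx hc hmem
        exact ⟨E, hE.1, fun _ _ => hGE⟩
      · exact ⟨0, le_rfl, fun _ h => absurd h hx⟩
    · exact ⟨0, le_rfl, fun h _ => absurd h hn⟩
  choose e he0 heq using hex
  -- strict monotonicity & injectivity of G n
  have G_strict : ∀ n, 1 ≤ n → ∀ E E', 0 ≤ E → 0 ≤ E' → E < E' → G n E < G n E' := by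
    intro n hn E E' hE hE' h
    exact hwm.2 _ _ _ _ (isComp_std n hn E hE) (isComp_std n hn E' hE') h 0 (hmem0 n hn) rfl
  have G_injOn : ∀ n, 1 ≤ n → ∀ E E', 0 ≤ E → 0 ≤ E' → G n E = G n E' → E = E' := by
    intro n hn E E' hE hE' h
    rcases lt_trichotomy E E' with hlt | hEq | hlt
    · exact absurd h (ne_of_lt (G_strict n hn E E' hE hE' hlt))
    · exact hEq
    · exact absurd h.symm (ne_of_lt (G_strict n hn E' E hE' hE hlt))
  have G_mono : ∀ n, 1 ≤ n → ∀ E E', 0 ≤ E → 0 ≤ E' → E ≤ E' → G n E ≤ G n E' := by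
    intro n hn E E' hE hE' h
    exact mono' _ _ _ _ (isComp_std n hn E hE) (isComp_std n hn E' hE') h 0 (hmem0 n hn)
  -- monotonicity of e
  have e_mono : ∀ n, 1 ≤ n → ∀ x y, 0 ≤ x → 0 ≤ y → x ≤ y → e n x ≤ e n y := by
    intro n hn x y hx hy hxy
    by_contra hcon
    push_neg at hcon
    have := G_strict n hn _ _ (he0 n y) (he0 n x) hcon
    rw [heq n x hn hx, heq n y hn hy] at this
    linarith
  -- continuity of e on [0,∞)
  have e_cont : ∀ n, 1 ≤ n → ContinuousOn (e n) (Set.Ici 0) := by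
    intro n hn
    have hnn : ∀ E : NNReal, 0 ≤ G n (E : ℝ) := fun E => G_nonneg n hn E E.2
    set g : NNReal → NNReal := fun E => ⟨G n (E : ℝ), hnn E⟩ with hgdef
    have hsm : StrictMono g := by
      intro a b hab
      have h : G n (a : ℝ) < G n (b : ℝ) :=
        G_strict n hn a b a.2 b.2 (by exact_mod_cast hab)
      exact_mod_cast h
    have hsurj : Function.Surjective g := by
      intro y
      refine ⟨⟨e n y, he0 n y⟩, ?_⟩
      apply Subtype.ext
      exact heq n y hn y.2
    set iso := StrictMono.orderIsoOfSurjective g hsm hsurj with hiso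
    have hcont : Continuous fun x : ℝ => ((iso.symm x.toNNReal : NNReal) : ℝ) :=
      NNReal.continuous_coe.comp (iso.symm.continuous.comp continuous_real_toNNReal)
    apply ContinuousOn.congr hcont.continuousOn
    intro x hx
    simp only [Set.mem_Ici] at hx
    apply G_injOn n hn _ _ (he0 n x) (iso.symm x.toNNReal).2
    rw [heq n x hn hx]
    have h1 : g (iso.symm x.toNNReal) = x.toNNReal :=
      StrictMono.orderIsoOfSurjective_self_symm_apply g hsm hsurj x.toNNReal
    have h2 : G n ((iso.symm x.toNNReal : NNReal) : ℝ) = ((x.toNNReal : NNReal) : ℝ) :=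
      congrArg (fun z : NNReal => (z : ℝ)) h1
    nth_rewrite 1 [← Real.coe_toNNReal x hx]
    exact h2.symm
  -- the parametric functions
  set f : ℕ → ℝ → ℝ := fun k x => φ (Finset.range k) stdR (e k x) (k - 1) with hf
  have hmemtop : ∀ k : ℕ, 1 ≤ k → k - 1 ∈ Finset.range k := by
    intro k hk; exact Finset.mem_range.mpr (by omega)
  -- key lemma
  have key : ∀ n, 1 ≤ n → ∀ E, 0 ≤ E → ∀ p, p < n →
      φ (Finset.range n) stdR E p = f (p + 1) (G n E) := by
    intro n hn E hE p hp
    set x := G n E with hx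
    have hx0 : 0 ≤ x := G_nonneg n hn E hE
    set S := Finset.range (p + 1) with hS
    have hSsub : S ⊆ Finset.range n := Finset.range_subset_range.mpr (by omega)
    have hSne : S.Nonempty := Finset.nonempty_range_iff.mpr (by omega)
    have hScard : S.card = p + 1 := Finset.card_range _
    have hEs : (0:ℝ) ≤ ∑ j ∈ S, φ (Finset.range n) stdR E j :=
      Finset.sum_nonneg fun j hj => (hrule _ _ _ (isComp_std n hn E hE)).1 j (hSsub hj)
    set ES := ∑ j ∈ S, φ (Finset.range n) stdR E j with hESdef
    have htcS := htc (Finset.range n) stdR E (isComp_std n hn E hE) S hSsub hSne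
      (by intro i hi; rw [hScard]; unfold stdR
          have := Finset.mem_range.mp hi; omega)
    -- subcompetition (S, subRank S stdR, ES) is a competition
    have hrankS : IsRanking S (subRank S stdR) := by
      have := isRanking_std (p + 1)
      unfold IsRanking at this ⊢
      rw [hS]
      apply this.congr
      intro i hi
      simp only [Finset.coe_range, Set.mem_Iio] at hi
      exact (subRank_range (p + 1) i hi).symm
    have hcS : IsCompetition S (subRank S stdR) ES := ⟨hSne, hrankS, hEs⟩
    -- anonymity: replace subRank by stdR
    have hanonS : ∀ i ∈ S, φ S (subRank S stdR) ES i = φ S stdR ES i := by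
      intro i hi
      have hi' : i < p + 1 := Finset.mem_range.mp hi
      refine hanon S (subRank S stdR) S stdR ES hcS ?_ rfl i hi i hi ?_
      · rw [hS]; exact isComp_std (p + 1) (by omega) ES hEs
      · rw [hS, subRank_range (p + 1) i hi']; rfl
    have chain : ∀ i ∈ S, φ (Finset.range n) stdR E i = φ (Finset.range (p + 1)) stdR ES i := by
      intro i hi
      rw [htcS i hi, ← hESdef, hanonS i hi, hS]
    -- winner: ES = e (p+1) x
    have h0S : 0 ∈ S := Finset.mem_range.mpr (by omega)
    have hwinner : G (p + 1) ES = x := by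
      rw [hx, hG]
      exact (chain 0 h0S).symm
    have hES_eq : ES = e (p + 1) x := by
      apply G_injOn (p + 1) (by omega) _ _ hEs (he0 (p + 1) x)
      rw [hwinner, heq (p + 1) x (by omega) hx0]
    have hpS : p ∈ S := Finset.mem_range.mpr (by omega)
    rw [chain p hpS, hES_eq, hf]
    simp
  refine ⟨f, ?_, ?_, ?_, ?_⟩
  · -- continuity, monotonicity, nonnegativity
    intro k hk
    refine ⟨?_, ?_, ?_⟩
    · -- continuity
      have hφcont : ContinuousOn (fun E => φ (Finset.range k) stdR E (k - 1)) (Set.Ici 0) := by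
        have : LipschitzOnWith 1 (fun E => φ (Finset.range k) stdR E (k - 1)) (Set.Ici 0) := by
          rw [lipschitzOnWith_iff_dist_le_mul]
          intro x hx y hy
          simp only [Set.mem_Ici] at hx hy
          rcases le_total x y with h | h
          · have h1 := lip _ _ _ _ (isComp_std k hk x hx) (isComp_std k hk y hy) h _ (hmemtop k hk)
            have h2 := mono' _ _ _ _ (isComp_std k hk x hx) (isComp_std k hk y hy) h _ (hmemtop k hk)
            rw [Real.dist_eq, Real.dist_eq]
            rw [abs_sub_comm, abs_of_nonneg (by linarith), abs_sub_comm, abs_of_nonneg (by linarith)]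
            push_cast; linarith
          · have h1 := lip _ _ _ _ (isComp_std k hk y hy) (isComp_std k hk x hx) h _ (hmemtop k hk)
            have h2 := mono' _ _ _ _ (isComp_std k hk y hy) (isComp_std k hk x hx) h _ (hmemtop k hk)
            rw [Real.dist_eq, Real.dist_eq]
            rw [abs_of_nonneg (by linarith), abs_of_nonneg (by linarith)]
            push_cast; linarith
        exact this.continuousOn
      exact hφcont.comp (e_cont k hk) (fun x _ => he0 k x)
    · -- monotonicity
      intro x hx y hy hxy
      simp only [Set.mem_Ici] at hx hy
      exact mono' _ _ _ _ (isComp_std k hk _ (he0 k x)) (isComp_std k hk _ (he0 k y))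
        (e_mono k hk x y hx hy hxy) _ (hmemtop k hk)
    · -- nonneg
      intro x hx
      exact (hrule _ _ _ (isComp_std k hk _ (he0 k x))).1 _ (hmemtop k hk)
  · -- f 1 x = x
    intro x hx
    show φ (Finset.range 1) stdR (e 1 x) (1 - 1) = x
    exact heq 1 x le_rfl hx
  · -- decreasing
    intro k hk x hx
    set E := e (k + 1) x with hE
    have hE0 : 0 ≤ E := he0 (k + 1) x
    have hGE : G (k + 1) E = x := heq (k + 1) x (by omega) hx
    have h1 : φ (Finset.range (k + 1)) stdR E (k - 1) = f k x := by
      have := key (k + 1) (by omega) E hE0 (k - 1) (by omega)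
      have hkk : k - 1 + 1 = k := by omega
      rwa [hGE, hkk] at this
    have h2 : f (k + 1) x = φ (Finset.range (k + 1)) stdR E k := by
      rw [hf]; simp [hE]
    rw [h2, ← h1]
    exact hop _ _ _ (isComp_std (k + 1) (by omega) E hE0) (k - 1)
      (Finset.mem_range.mpr (by omega)) k (Finset.mem_range.mpr (by omega))
      (by unfold stdR; omega)
  · -- representation
    intro N R E hc
    set n := N.card with hn
    have hn1 : 1 ≤ n := Finset.card_pos.mpr hc.1
    have hE : 0 ≤ E := hc.2.2
    set x := G n E with hx
    have hx0 : 0 ≤ x := G_nonneg n hn1 E hE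
    refine ⟨x, hx0, ?_, ?_⟩
    · have himg : Finset.Icc 1 n = (Finset.range n).image (· + 1) := by
        ext k
        simp only [Finset.mem_Icc, Finset.mem_image, Finset.mem_range]
        constructor
        · intro h; exact ⟨k - 1, by omega, by omega⟩
        · rintro ⟨a, ha, rfl⟩; omega
      rw [himg, Finset.sum_image (by intro a _ b _ h; simp only at h; omega)]
      have : ∀ p ∈ Finset.range n, f (p + 1) x = φ (Finset.range n) stdR E p := by
        intro p hp
        exact (key n hn1 E hE p (Finset.mem_range.mp hp)).symm
      rw [Finset.sum_congr rfl this]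
      exact (hrule _ _ _ (isComp_std n hn1 E hE)).2
    · intro i hi
      have hRi : 1 ≤ R i ∧ R i ≤ n := by
        have := hc.2.1.1 hi
        exact ⟨this.1, this.2⟩
      have htr : φ N R E i = φ (Finset.range n) stdR E (R i - 1) := by
        refine hanon N R (Finset.range n) stdR E hc (isComp_std n hn1 E hE)
          (by rw [Finset.card_range]) i hi (R i - 1) (Finset.mem_range.mpr (by omega)) ?_
        unfold stdR; omega
      have hkk : R i - 1 + 1 = R i := by omega
      rw [htr, key n hn1 E hE (R i - 1) (by omega), hkk, ← hx]

/-- A prize allocation rule satisfies anonymity, order preservation, winner strict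
endowment monotonicity, and top consistency if and only if it is a parametric rule. -/
theorem parametric_characterization (φ : Rule) (hrule : IsRule φ) :
    (Anonymous φ ∧ OrderPreserving φ ∧ WinnerStrictEndowMono φ ∧ TopConsistent φ) ↔
      IsParametric φ := by
  constructor
  · rintro ⟨h1, h2, h3, h4⟩
    exact forward_aux φ hrule h1 h2 h3 h4
  · intro hp
    exact backward_aux φ hrule hp
end

section
/- A parametric rule with representation f_1, f_2, … satisfies winner-loser strict order preservation if and only if f_2(x) < x for each x > 0. -/
open Finset
open scoped ENNReal

/-- A parametric rule with representation `f 1, f 2, ...` satisfies winner-loser strict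
order preservation if and only if `f 2 x < x` for each `x > 0`. -/
theorem parametric_wlsop_iff (φ : Rule) (f : ℕ → ℝ → ℝ) (hrule : IsRule φ)
    (hrep : ParamRepr φ f) :
    WinnerLoserStrictOP φ ↔ ∀ x : ℝ, 0 < x → f 2 x < x := by
  obtain ⟨hcm, h1, hstep, hex⟩ := hrep
  -- f is antitone in the index k (for k ≥ 1)
  have hdec : ∀ k m, 1 ≤ k → k ≤ m → ∀ x : ℝ, 0 ≤ x → f m x ≤ f k x := by
    intro k m hk hkm x hx
    induction m, hkm using Nat.le_induction with
    | base => exact le_rfl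
    | succ n hn ih => exact le_trans (hstep n (hk.trans hn) x hx) ih
  constructor
  · rintro ⟨hop, hwl⟩ x hx
    set N : Finset ℕ := {0, 1} with hN
    set R : ℕ → ℕ := fun n => n + 1 with hRdef
    have hcard : N.card = 2 := rfl
    have hR : IsRanking N R := by
      refine ⟨?_, ?_, ?_⟩
      · intro a ha
        simp only [hN, Finset.coe_insert, Finset.coe_singleton, Set.mem_insert_iff,
          Set.mem_singleton_iff] at ha
        rcases ha with rfl | rfl <;> simp [hRdef, hcard, Set.mem_Icc]
      · intro a _ b _ h
        simpa [hRdef] using h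
      · intro y hy
        rw [hcard] at hy
        simp only [Set.mem_Icc] at hy
        refine ⟨y - 1, ?_, ?_⟩
        · simp only [hN, Finset.coe_insert, Finset.coe_singleton, Set.mem_insert_iff,
            Set.mem_singleton_iff]
          omega
        · simp only [hRdef]; omega
    have hf2x : 0 ≤ f 2 x := (hcm 2 (by norm_num)).2.2 x hx.le
    set E : ℝ := x + f 2 x with hE
    have hcomp : IsCompetition N R E := ⟨⟨0, by simp [hN]⟩, hR, by linarith⟩
    obtain ⟨y, hy0, hsum, hval⟩ := hex N R E hcomp
    rw [hcard] at hsum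
    have hIcc : Finset.Icc 1 2 = ({1, 2} : Finset ℕ) := rfl
    rw [hIcc, Finset.sum_pair (by norm_num)] at hsum
    have h1y : f 1 y = y := h1 y hy0
    have h1x : f 1 x = x := h1 x hx.le
    have hyx : y = x := by
      rcases lt_trichotomy y x with h | h | h
      · exfalso
        have := (hcm 2 (by norm_num)).2.1 (Set.mem_Ici.2 hy0) (Set.mem_Ici.2 hx.le) h.le
        rw [h1y] at hsum; rw [hE] at hsum; linarith
      · exact h
      · exfalso
        have := (hcm 2 (by norm_num)).2.1 (Set.mem_Ici.2 hx.le) (Set.mem_Ici.2 hy0) h.le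
        rw [h1y] at hsum; rw [hE] at hsum; linarith
    have hEpos : 0 < E := by rw [hE]; linarith
    have h0N : (0 : ℕ) ∈ N := by simp [hN]
    have h1N : (1 : ℕ) ∈ N := by simp [hN]
    have := hwl N R E hcomp hEpos 0 h0N 1 h1N (by norm_num) rfl (by rw [hcard])
    rw [hval 0 h0N, hval 1 h1N] at this
    simp only [hRdef] at this
    rw [h1y, hyx] at this
    exact this
  · intro hf
    constructor
    · intro N R E hcomp i hi j hj hij
      obtain ⟨x, hx0, _, hval⟩ := hex N R E hcomp
      rw [hval i hi, hval j hj]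
      have hRi : 1 ≤ R i := (hcomp.2.1.1 hi).1
      exact hdec (R i) (R j) hRi hij.le x hx0
    · intro N R E hcomp hE i hi j hj hij hRi hRj
      obtain ⟨x, hx0, hsum, hval⟩ := hex N R E hcomp
      have hcard1 : 1 ≤ N.card := Finset.card_pos.mpr hcomp.1
      have hn2 : 2 ≤ N.card := by
        by_contra h
        have hRR : R i = R j := by omega
        exact hij (hcomp.2.1.2.1 hi hj hRR)
      have hxpos : 0 < x := by
        rcases hx0.eq_or_lt with h | h
        · exfalso
          have hz : ∑ k ∈ Finset.Icc 1 N.card, f k x = 0 := by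
            refine Finset.sum_eq_zero ?_
            intro k hk
            have hk1 : 1 ≤ k := (Finset.mem_Icc.mp hk).1
            have hle : f k x ≤ f 1 x := hdec 1 k le_rfl hk1 x hx0
            have hge : 0 ≤ f k x := (hcm k hk1).2.2 x hx0
            rw [h1 x hx0] at hle
            linarith [h]
          rw [hz] at hsum
          linarith
        · exact h
      rw [hval i hi, hval j hj, hRi, hRj, h1 x hx0]
      exact lt_of_le_of_lt (hdec 2 N.card (by norm_num) hn2 x hx0) (hf x hxpos)
end

section
/- A parametric rule with representation f_1, f_2, … satisfies strict order preservation if and only if f_{k+1}(x) < f_k(x) for each k and each x > 0. -/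
open Finset
open scoped ENNReal

/-- A parametric rule with representation `f 1, f 2, ...` satisfies strict order
preservation if and only if `f (k+1) x < f k x` for each `k >= 1` and each `x > 0`. -/
theorem parametric_sop_iff (φ : Rule) (f : ℕ → ℝ → ℝ) (hrule : IsRule φ)
    (hrep : ParamRepr φ f) :
    StrictOrderPreserving φ ↔
      ∀ k, 1 ≤ k → ∀ x : ℝ, 0 < x → f (k + 1) x < f k x := by
  obtain ⟨hcont, hf1, hdec, hparam⟩ := hrep
  constructor
  · intro hsop k hk x hx
    set N : Finset ℕ := Finset.range (k + 1) with hN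
    set R : ℕ → ℕ := fun i => i + 1 with hR
    have hcard : N.card = k + 1 := by simp [hN]
    have hrank : IsRanking N R := by
      refine ⟨?_, ?_, ?_⟩
      · intro i hi
        simp only [hN, Finset.coe_range, Set.mem_Iio] at hi
        simp only [hR, hcard, Set.mem_Icc]
        omega
      · intro a _ b _ h
        simpa [hR] using h
      · intro m hm
        simp only [hcard, Set.mem_Icc] at hm
        refine ⟨m - 1, ?_, ?_⟩
        · simp only [hN, Finset.coe_range, Set.mem_Iio]; omega
        · simp only [hR]; omega
    set E : ℝ := ∑ j ∈ Finset.Icc 1 (k + 1), f j x with hE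
    have hEnn' : ∀ j ∈ Finset.Icc 1 (k + 1), 0 ≤ f j x := fun j hj =>
      (hcont j (Finset.mem_Icc.mp hj).1).2.2 x hx.le
    have hxle : x ≤ E := by
      have h1 : f 1 x = x := hf1 x hx.le
      calc x = f 1 x := h1.symm
        _ ≤ E := Finset.single_le_sum hEnn' (by simp)
    have hEpos : 0 < E := lt_of_lt_of_le hx hxle
    have hcomp : IsCompetition N R E := ⟨⟨0, by simp [hN]⟩, hrank, hEpos.le⟩
    obtain ⟨x', hx', hsum, hval⟩ := hparam N R E hcomp
    rw [hcard] at hsum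
    have hxx : x' = x := by
      by_contra hne
      rcases lt_or_gt_of_ne hne with h | h
      · have hlt : ∑ j ∈ Finset.Icc 1 (k + 1), f j x' <
            ∑ j ∈ Finset.Icc 1 (k + 1), f j x := by
          apply Finset.sum_lt_sum
          · intro j hj
            exact (hcont j (Finset.mem_Icc.mp hj).1).2.1
              (Set.mem_Ici.mpr hx') (Set.mem_Ici.mpr hx.le) h.le
          · refine ⟨1, by simp, ?_⟩
            rw [hf1 x' hx', hf1 x hx.le]; exact h
        rw [hsum] at hlt; exact absurd hlt (lt_irrefl E)
      · have hlt : ∑ j ∈ Finset.Icc 1 (k + 1), f j x <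
            ∑ j ∈ Finset.Icc 1 (k + 1), f j x' := by
          apply Finset.sum_lt_sum
          · intro j hj
            exact (hcont j (Finset.mem_Icc.mp hj).1).2.1
              (Set.mem_Ici.mpr hx.le) (Set.mem_Ici.mpr hx') h.le
          · refine ⟨1, by simp, ?_⟩
            rw [hf1 x' hx', hf1 x hx.le]; exact h
        rw [hsum] at hlt; exact absurd hlt (lt_irrefl E)
    have hi : (k - 1) ∈ N := by simp [hN]
    have hj : k ∈ N := by simp [hN]
    have hRlt : R (k - 1) < R k := by simp [hR]; omega
    have key := hsop N R E hcomp hEpos (k - 1) hi k hj hRlt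
    rw [hval (k - 1) hi, hval k hj, hxx] at key
    have h1 : R (k - 1) = k := by simp [hR]; omega
    have h2 : R k = k + 1 := rfl
    rwa [h1, h2] at key
  · intro hstrict N R E hcomp hE i hiN j hjN hij
    obtain ⟨x, hx, hsum, hval⟩ := hparam N R E hcomp
    have hxpos : 0 < x := by
      rcases hx.lt_or_eq with h | h
      · exact h
      · exfalso
        have hall : ∀ m, 1 ≤ m → f m 0 = 0 := by
          intro m hm
          induction m with
          | zero => omega
          | succ n ih =>
            rcases Nat.eq_or_lt_of_le hm with h1 | h1
            · rw [← h1]; exact hf1 0 le_rfl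
            · have hn : 1 ≤ n := by omega
              have := hdec n hn 0 le_rfl
              rw [ih hn] at this
              exact le_antisymm this ((hcont (n+1) (by omega)).2.2 0 le_rfl)
        have : (∑ k ∈ Finset.Icc 1 N.card, f k x) = 0 := by
          rw [← h]
          exact Finset.sum_eq_zero fun m hm => hall m (Finset.mem_Icc.mp hm).1
        rw [hsum] at this
        exact absurd this (ne_of_gt hE)
    rw [hval i hiN, hval j hjN]
    have hRi1 : 1 ≤ R i := (Set.mem_Icc.mp (hcomp.2.1.1 hiN)).1
    -- strict chain: f (R j) x < f (R i) x
    have chain : ∀ n, R i < n → f n x < f (R i) x := by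
      intro n
      induction n with
      | zero => omega
      | succ m ih =>
        intro hm
        rcases Nat.eq_or_lt_of_le hm with h1 | h1
        · have : R i = m := by omega
          rw [← this]
          exact hstrict (R i) hRi1 x hxpos
        · have hlt : R i < m := by omega
          have hm1 : 1 ≤ m := by omega
          exact lt_of_le_of_lt (hdec m hm1 x hx) (ih hlt)
    exact chain (R j) hij
end

section
/- A parametric rule with representation f_1, f_2, … satisfies strict endowment monotonicity if and only if f_k is strictly increasing for each k. -/
open Finset
open scoped ENNReal

/-- A parametric rule with representation `f 1, f 2, ...` satisfies strict endowment
monotonicity if and only if `f k` is strictly increasing for each `k >= 1`. -/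
theorem parametric_sem_iff (φ : Rule) (f : ℕ → ℝ → ℝ) (hrule : IsRule φ)
    (hrep : ParamRepr φ f) :
    StrictEndowMono φ ↔ ∀ k, 1 ≤ k → StrictMonoOn (f k) (Set.Ici 0) := by
  obtain ⟨hprop, hid, -, hpar⟩ := hrep
  -- sums are strictly monotone in x
  have hsumlt : ∀ n, 1 ≤ n → ∀ x y : ℝ, 0 ≤ x → 0 ≤ y → x < y →
      ∑ k ∈ Finset.Icc 1 n, f k x < ∑ k ∈ Finset.Icc 1 n, f k y := by
    intro n hn x y hx hy hxy
    refine Finset.sum_lt_sum (fun j hj => ?_) ⟨1, Finset.mem_Icc.2 ⟨le_refl 1, hn⟩, ?_⟩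
    · exact (hprop j (Finset.mem_Icc.1 hj).1).2.1 hx hy hxy.le
    · rw [hid x hx, hid y hy]; exact hxy
  have huniq : ∀ n, 1 ≤ n → ∀ x y : ℝ, 0 ≤ x → 0 ≤ y →
      ∑ k ∈ Finset.Icc 1 n, f k x = ∑ k ∈ Finset.Icc 1 n, f k y → x = y := by
    intro n hn x y hx hy h
    rcases lt_trichotomy x y with hlt | heq | hgt
    · exact absurd h (ne_of_lt (hsumlt n hn x y hx hy hlt))
    · exact heq
    · exact absurd h.symm (ne_of_lt (hsumlt n hn y x hy hx hgt))
  constructor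
  · -- strict endowment monotonicity → each f k strictly increasing
    intro hsem k hk x hx y hy hxy
    simp only [Set.mem_Ici] at hx hy
    set N : Finset ℕ := Finset.Icc 1 k with hN
    have hcard : N.card = k := by simp [hN]
    have hne : N.Nonempty := ⟨1, Finset.mem_Icc.2 ⟨le_refl 1, hk⟩⟩
    have hrank : IsRanking N id := by
      unfold IsRanking
      rw [hcard, hN, Finset.coe_Icc]
      exact Set.bijOn_id _
    have hnonneg : ∀ z : ℝ, 0 ≤ z → 0 ≤ ∑ j ∈ Finset.Icc 1 k, f j z := by
      intro z hz
      exact Finset.sum_nonneg fun j hj => (hprop j (Finset.mem_Icc.1 hj).1).2.2 z hz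
    set E := ∑ j ∈ Finset.Icc 1 k, f j x with hE
    set E' := ∑ j ∈ Finset.Icc 1 k, f j y with hE'
    have hcomp : IsCompetition N id E := ⟨hne, hrank, hnonneg x hx⟩
    have hcomp' : IsCompetition N id E' := ⟨hne, hrank, hnonneg y hy⟩
    have hEE' : E < E' := hsumlt k hk x y hx hy hxy
    have hkN : k ∈ N := Finset.mem_Icc.2 ⟨hk, le_refl k⟩
    obtain ⟨x₀, hx₀, hsum₀, hval₀⟩ := hpar N id E hcomp
    obtain ⟨y₀, hy₀, hsum₀', hval₀'⟩ := hpar N id E' hcomp'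
    rw [hcard] at hsum₀ hsum₀'
    have hx0 : x₀ = x := huniq k hk x₀ x hx₀ hx (by rw [hsum₀])
    have hy0 : y₀ = y := huniq k hk y₀ y hy₀ hy (by rw [hsum₀'])
    have h1 := hval₀ k hkN
    have h2 := hval₀' k hkN
    simp only [id] at h1 h2
    have := hsem N id E E' hcomp hcomp' hEE' k hkN
    rwa [h1, h2, hx0, hy0] at this
  · -- each f k strictly increasing → strict endowment monotonicity
    intro hsm N R E E' hcomp hcomp' hEE' i hi
    obtain ⟨x, hx, hsum, hval⟩ := hpar N R E hcomp
    obtain ⟨y, hy, hsum', hval'⟩ := hpar N R E' hcomp'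
    have hcardpos : 1 ≤ N.card := Finset.card_pos.2 hcomp.1
    have hxy : x < y := by
      rcases lt_trichotomy x y with h | h | h
      · exact h
      · exact absurd (hsum.symm.trans (h ▸ hsum')) (ne_of_lt hEE')
      · have := hsumlt N.card hcardpos y x hy hx h
        rw [hsum, hsum'] at this
        exact absurd this (not_lt.2 hEE'.le)
    have hRi : R i ∈ Set.Icc 1 N.card := hcomp.2.1.1 hi
    rw [hval i hi, hval' i hi]
    exact hsm (R i) hRi.1 hx hy hxy
end

section
/- A prize allocation rule satisfies anonymity, order preservation, scale invariance, and top consistency if and only if it is a proportional rule. -/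
open Finset
open scoped ENNReal

/-- Proportional rules: there are `λ 1, λ 2, … ∈ [0, ∞)` with `λ 1 > 0` and
`λ (k+1) ≤ λ k`, such that the prize at position `r` is
`λ r · E / ∑_{k=1}^{|N|} λ k` (the value `λ 0` is irrelevant). -/
def IsProportional (φ : Rule) : Prop :=
  ∃ lam : ℕ → ℝ, (∀ k, 1 ≤ k → 0 ≤ lam k) ∧ 0 < lam 1 ∧
    (∀ k, 1 ≤ k → lam (k + 1) ≤ lam k) ∧
    ∀ N R E, IsCompetition N R E → ∀ i ∈ N,
      φ N R E i = lam (R i) * E / ∑ k ∈ Finset.Icc 1 N.card, lam k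

section Aux

private lemma card_Icc_one (n : ℕ) : (Finset.Icc 1 n).card = n := by simp

private lemma icc_ranking (n : ℕ) : IsRanking (Finset.Icc 1 n) id := by
  unfold IsRanking
  rw [card_Icc_one, Finset.coe_Icc]
  exact Set.bijOn_id _

private lemma top_image {N S : Finset ℕ} {R : ℕ → ℕ} (hR : IsRanking N R)
    (hSN : S ⊆ N) (htop : ∀ i ∈ S, R i ≤ S.card) :
    S.image R = Finset.Icc 1 S.card := by
  apply Finset.eq_of_subset_of_card_le
  · intro r hr
    rw [Finset.mem_image] at hr
    obtain ⟨i, hi, rfl⟩ := hr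
    have h1 := hR.mapsTo (hSN hi)
    simp only [Set.mem_Icc] at h1
    exact Finset.mem_Icc.2 ⟨h1.1, htop i hi⟩
  · rw [Finset.card_image_of_injOn (hR.injOn.mono (Finset.coe_subset.2 hSN)),
      card_Icc_one]

private lemma bijOn_of_image {S : Finset ℕ} {R : ℕ → ℕ}
    (himg : S.image R = Finset.Icc 1 S.card) (hinj : Set.InjOn R S) :
    IsRanking S R := by
  have hcoe : R '' ↑S = Set.Icc 1 S.card := by
    rw [← Finset.coe_image, himg, Finset.coe_Icc]
  refine ⟨fun i hi => ?_, hinj, fun r hr => ?_⟩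
  · rw [← hcoe]; exact Set.mem_image_of_mem R hi
  · rw [← hcoe] at hr; exact hr

private lemma subRank_eq {S : Finset ℕ} {R : ℕ → ℕ}
    (himg : S.image R = Finset.Icc 1 S.card) (hinj : Set.InjOn R S)
    {i : ℕ} (hi : i ∈ S) : subRank S R i = R i := by
  have hRi : R i ∈ Finset.Icc 1 S.card := himg ▸ Finset.mem_image_of_mem R hi
  rw [Finset.mem_Icc] at hRi
  unfold subRank
  have h2 : ((S.filter fun j => R j ≤ R i).image R).card
      = (S.filter fun j => R j ≤ R i).card :=
    Finset.card_image_of_injOn (hinj.mono (by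
      intro x hx; simp only [Finset.coe_filter, Set.mem_setOf_eq] at hx
      exact hx.1))
  have h1 : (S.filter fun j => R j ≤ R i).image R
      = (S.image R).filter (· ≤ R i) := by
    ext r
    simp only [Finset.mem_image, Finset.mem_filter]
    constructor
    · rintro ⟨x, hx, rfl⟩; exact ⟨⟨x, hx.1, rfl⟩, hx.2⟩
    · rintro ⟨⟨x, hx, rfl⟩, h⟩; exact ⟨x, ⟨hx, h⟩, rfl⟩
  rw [← h2, h1, himg]
  have h3 : (Finset.Icc 1 S.card).filter (· ≤ R i) = Finset.Icc 1 (R i) := by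
    ext j; simp only [Finset.mem_filter, Finset.mem_Icc]; omega
  rw [h3, card_Icc_one]

private lemma subRank_ranking {S : Finset ℕ} {R : ℕ → ℕ}
    (himg : S.image R = Finset.Icc 1 S.card) (hinj : Set.InjOn R S) :
    IsRanking S (subRank S R) :=
  (bijOn_of_image himg hinj).congr fun _ hi => (subRank_eq himg hinj hi).symm

end Aux

/-- A prize allocation rule satisfies anonymity, order preservation, scale invariance,
and top consistency if and only if it is a proportional rule. -/
theorem proportional_characterization (φ : Rule) (hrule : IsRule φ) :
    (Anonymous φ ∧ OrderPreserving φ ∧ ScaleInvariant φ ∧ TopConsistent φ) ↔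
      IsProportional φ := by
  constructor
  · rintro ⟨hA, hOP, hSI, hTC⟩
    set f : ℕ → ℕ → ℝ := fun n r => φ (Finset.Icc 1 n) id 1 r with hf
    have hcompI : ∀ n : ℕ, 1 ≤ n → ∀ E : ℝ, 0 ≤ E → IsCompetition (Finset.Icc 1 n) id E :=
      fun n hn E hE => ⟨⟨1, Finset.mem_Icc.2 ⟨le_refl 1, hn⟩⟩, icc_ranking n, hE⟩
    have hfnn : ∀ n, 1 ≤ n → ∀ r ∈ Finset.Icc 1 n, 0 ≤ f n r :=
      fun n hn => (hrule _ _ _ (hcompI n hn 1 zero_le_one)).1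
    have hfsum : ∀ n, 1 ≤ n → ∑ r ∈ Finset.Icc 1 n, f n r = 1 :=
      fun n hn => (hrule _ _ _ (hcompI n hn 1 zero_le_one)).2
    have hf1pos : ∀ n, 1 ≤ n → 0 < f n 1 := by
      intro n hn
      have hle : ∀ r ∈ Finset.Icc 1 n, f n r ≤ f n 1 := by
        intro r hr
        rcases eq_or_lt_of_le (Finset.mem_Icc.1 hr).1 with h | h
        · rw [← h]
        · exact hOP _ _ _ (hcompI n hn 1 zero_le_one) 1
            (Finset.mem_Icc.2 ⟨le_refl 1, hn⟩) r hr h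
      have h1 : (1:ℝ) ≤ n * f n 1 := by
        calc (1:ℝ) = ∑ r ∈ Finset.Icc 1 n, f n r := (hfsum n hn).symm
        _ ≤ ∑ _r ∈ Finset.Icc 1 n, f n 1 := Finset.sum_le_sum hle
        _ = n * f n 1 := by rw [Finset.sum_const, card_Icc_one, nsmul_eq_mul]
      have hn0 : (0:ℝ) < n := by exact_mod_cast hn
      nlinarith
    have hred : ∀ N R E, IsCompetition N R E → ∀ i ∈ N,
        φ N R E i = E * f N.card (R i) := by
      intro N R E hc i hi
      have hc1 : IsCompetition N R 1 := ⟨hc.1, hc.2.1, zero_le_one⟩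
      have hn1 : 1 ≤ N.card := hc.1.card_pos
      rw [hSI N R E hc i hi]
      congr 1
      have hRi : R i ∈ Finset.Icc 1 N.card := by
        have := hc.2.1.mapsTo hi
        rw [Set.mem_Icc] at this
        exact Finset.mem_Icc.2 this
      exact hA N R (Finset.Icc 1 N.card) id 1 hc1 (hcompI _ hn1 1 zero_le_one)
        (card_Icc_one _).symm i hi (R i) hRi rfl
    have hrel : ∀ n m, 1 ≤ m → m ≤ n → ∀ r ∈ Finset.Icc 1 m,
        f n r = (∑ j ∈ Finset.Icc 1 m, f n j) * f m r := by
      intro n m hm hmn r hr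
      have hn : 1 ≤ n := le_trans hm hmn
      have hcompN := hcompI n hn 1 zero_le_one
      have hSN : Finset.Icc 1 m ⊆ Finset.Icc 1 n := Finset.Icc_subset_Icc le_rfl hmn
      have himg : (Finset.Icc 1 m).image id = Finset.Icc 1 (Finset.Icc 1 m).card := by
        rw [Finset.image_id, card_Icc_one]
      have hinj : Set.InjOn id ((Finset.Icc 1 m : Finset ℕ) : Set ℕ) := fun _ _ _ _ h => h
      have htc := hTC _ _ _ hcompN (Finset.Icc 1 m) hSN
        ⟨1, Finset.mem_Icc.2 ⟨le_rfl, hm⟩⟩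
        (fun i hi => by rw [card_Icc_one]; exact (Finset.mem_Icc.1 hi).2) r hr
      set s := ∑ j ∈ Finset.Icc 1 m, φ (Finset.Icc 1 n) id 1 j with hs
      have hs0 : 0 ≤ s :=
        Finset.sum_nonneg fun j hj => (hrule _ _ _ hcompN).1 j (hSN hj)
      have hanon : φ (Finset.Icc 1 m) (subRank (Finset.Icc 1 m) id) s r
          = φ (Finset.Icc 1 m) id s r :=
        hA _ _ _ _ _ ⟨⟨1, Finset.mem_Icc.2 ⟨le_rfl, hm⟩⟩, subRank_ranking himg hinj, hs0⟩
          (hcompI m hm s hs0) rfl r hr r hr (subRank_eq himg hinj hr)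
      calc f n r = φ (Finset.Icc 1 m) (subRank (Finset.Icc 1 m) id) s r := htc
      _ = φ (Finset.Icc 1 m) id s r := hanon
      _ = s * f m r := hSI _ _ _ (hcompI m hm s hs0) r hr
    set lam : ℕ → ℝ := fun r => f r r / f r 1 with hlam
    have key : ∀ n r, 1 ≤ r → r ≤ n → f n r = lam r * f n 1 := by
      intro n r h1 hrn
      have hrr := hrel n r h1 hrn r (Finset.mem_Icc.2 ⟨h1, le_rfl⟩)
      have hr1 := hrel n r h1 hrn 1 (Finset.mem_Icc.2 ⟨le_rfl, h1⟩)
      have hp1 := hf1pos r h1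
      rw [hrr, hr1, hlam]
      field_simp
    have sum_lam : ∀ n, 1 ≤ n → ∑ k ∈ Finset.Icc 1 n, lam k = 1 / f n 1 := by
      intro n hn
      have hne : f n 1 ≠ 0 := ne_of_gt (hf1pos n hn)
      rw [eq_div_iff hne, Finset.sum_mul]
      calc ∑ k ∈ Finset.Icc 1 n, lam k * f n 1
          = ∑ k ∈ Finset.Icc 1 n, f n k := by
            refine Finset.sum_congr rfl fun k hk => ?_
            rw [← key n k (Finset.mem_Icc.1 hk).1 (Finset.mem_Icc.1 hk).2]
        _ = 1 := hfsum n hn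
    refine ⟨lam, ?_, ?_, ?_, ?_⟩
    · intro k hk
      exact div_nonneg (hfnn k hk k (Finset.mem_Icc.2 ⟨hk, le_rfl⟩))
        (le_of_lt (hf1pos k hk))
    · show (0:ℝ) < f 1 1 / f 1 1
      rw [div_self (ne_of_gt (hf1pos 1 le_rfl))]
      exact one_pos
    · intro k hk
      have hkk : k ≤ k + 1 := Nat.le_succ k
      have hle : f (k+1) (k+1) ≤ f (k+1) k :=
        hOP _ _ _ (hcompI (k+1) (le_trans hk hkk) 1 zero_le_one) k
          (Finset.mem_Icc.2 ⟨hk, hkk⟩) (k+1)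
          (Finset.mem_Icc.2 ⟨le_trans hk hkk, le_rfl⟩) (Nat.lt_succ_self k)
      have hp := hf1pos (k+1) (le_trans hk hkk)
      have e1 := key (k+1) (k+1) (le_trans hk hkk) le_rfl
      have e2 := key (k+1) k hk hkk
      rw [e1, e2] at hle
      exact le_of_mul_le_mul_right hle hp
    · intro N R E hc i hi
      have hn1 : 1 ≤ N.card := hc.1.card_pos
      have hRi := hc.2.1.mapsTo hi
      rw [Set.mem_Icc] at hRi
      rw [hred N R E hc i hi, sum_lam N.card hn1, key N.card (R i) hRi.1 hRi.2]
      have hne : f N.card 1 ≠ 0 := ne_of_gt (hf1pos N.card hn1)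
      field_simp
  · rintro ⟨lam, hnn, hpos, hdec, hform⟩
    have hmono : ∀ k l, 1 ≤ k → k ≤ l → lam l ≤ lam k := by
      intro k l hk hkl
      induction l, hkl using Nat.le_induction with
      | base => exact le_refl _
      | succ n hn ih => exact le_trans (hdec n (le_trans hk hn)) ih
    have hD : ∀ n : ℕ, 1 ≤ n → 0 < ∑ k ∈ Finset.Icc 1 n, lam k := by
      intro n hn
      have h1 : lam 1 ≤ ∑ k ∈ Finset.Icc 1 n, lam k :=
        Finset.single_le_sum (fun k hk => hnn k (Finset.mem_Icc.1 hk).1)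
          (Finset.mem_Icc.2 ⟨le_refl 1, hn⟩)
      linarith
    refine ⟨?_, ?_, ?_, ?_⟩
    · intro N R N' R' E hc hc' hcard i hi j hj hij
      rw [hform N R E hc i hi, hform N' R' E hc' j hj, hij, hcard]
    · intro N R E hc i hi j hj hlt
      rw [hform _ _ _ hc i hi, hform _ _ _ hc j hj]
      have hn1 : 1 ≤ N.card := hc.1.card_pos
      have hDpos := hD N.card hn1
      have h1 : 1 ≤ R i := by
        have := hc.2.1.mapsTo hi; rw [Set.mem_Icc] at this; exact this.1
      have hm := hmono (R i) (R j) h1 (le_of_lt hlt)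
      gcongr
      exact hc.2.2
    · intro N R E hc i hi
      have hc1 : IsCompetition N R 1 := ⟨hc.1, hc.2.1, zero_le_one⟩
      rw [hform _ _ _ hc i hi, hform _ _ _ hc1 i hi]
      ring
    · intro N R E hc S hSN hSne htop i hiS
      have hranking := hc.2.1
      have himg := top_image hranking hSN htop
      have hinjS : Set.InjOn R ↑S := hranking.injOn.mono (Finset.coe_subset.2 hSN)
      have hm1 : 1 ≤ S.card := hSne.card_pos
      have hn1 : 1 ≤ N.card := hc.1.card_pos
      have hDn := hD N.card hn1
      have hDm := hD S.card hm1
      have hsum : ∑ j ∈ S, φ N R E j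
          = (∑ k ∈ Finset.Icc 1 S.card, lam k) * E / ∑ k ∈ Finset.Icc 1 N.card, lam k := by
        rw [Finset.sum_congr rfl (fun j hj => hform N R E hc j (hSN hj)),
          ← Finset.sum_div, ← Finset.sum_mul]
        congr 2
        rw [← himg, Finset.sum_image (fun x hx y hy h => hinjS hx hy h)]
      have hs0 : 0 ≤ ∑ j ∈ S, φ N R E j :=
        Finset.sum_nonneg fun j hj => (hrule N R E hc).1 j (hSN hj)
      have hcompS : IsCompetition S (subRank S R) (∑ j ∈ S, φ N R E j) :=
        ⟨hSne, subRank_ranking himg hinjS, hs0⟩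
      rw [hform _ _ _ hcompS i hiS, subRank_eq himg hinjS hiS, hsum,
        hform N R E hc i (hSN hiS)]
      field_simp
end
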